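/- arXiv:2312.00368 — 4 statements merged into one kernel-verified Lean document; each statement's English description precedes it below -/
import Mathlib

section
/- Let H be a connected linear k-uniform hypergraph with k ≥ 3, and v ∈ V(H). Then the number of Berge walks of length 2 starting at v equals (k-1)·Σ_{i=1}^{k} i·e_i(N_v), where e_i(N_v) is the number of edges of H intersecting the neighborhood N_v of v in exactly i vertices. -/
attribute [local instance] Classical.propDecidable

/-- The degree of a vertex. -/
def hDeg {V : Type*} [DecidableEq V] (E : Finset (Finset V)) (v : V) : ℕ :=
  (E.filter (fun e => v ∈ e)).card

/-- The neighbourhood of `v`: vertices `w ≠ v` such that `{v,w}` lies in an edge. -/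
def hNbhd {V : Type*} [Fintype V] [DecidableEq V] (E : Finset (Finset V)) (v : V) :
    Finset V :=
  Finset.univ.filter (fun w => w ≠ v ∧ ∃ e ∈ E, v ∈ e ∧ w ∈ e)

/-- `e_i(S)`: the number of edges meeting `S` in exactly `i` vertices. -/
def eCount {V : Type*} [DecidableEq V] (E : Finset (Finset V)) (S : Finset V) (i : ℕ) : ℕ :=
  (E.filter (fun e => (e ∩ S).card = i)).card

/-! Classify the walks `v e₁ w e₂ x` by their middle vertex `w`. By linearity, `v` and `w ≠ v`
share at most one edge, and exactly one when `w ∈ N_v`; so the walks through `w ∈ N_v` number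
`(k - 1)·deg w`, one for each continuation `e₂ x`. Summing `deg w` over `N_v` counts each edge `e`
once for every vertex of `e ∩ N_v`, which gives `∑ i·e_i(N_v)`. -/

open Finset

lemma card_filter_product_eq_sum {α β : Type*} (s : Finset α) (t : Finset β)
    (p : α × β → Prop) [DecidablePred p] :
    #{x ∈ s ×ˢ t | p x} = ∑ a ∈ s, #{b ∈ t | p (a, b)} := by
  simp only [card_filter, sum_product]

section

variable {V : Type*} [DecidableEq V] {E : Finset (Finset V)}

lemma card_filter_mem_mem_le_one (hlin : ∀ e ∈ E, ∀ f ∈ E, e ≠ f → #(e ∩ f) ≤ 1) {v w : V}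
    (hvw : v ≠ w) : #{e ∈ E | v ∈ e ∧ w ∈ e} ≤ 1 := by
  refine card_le_one.2 fun e he f hf => by_contra fun hef => ?_
  simp only [mem_filter] at he hf
  have hpair : {v, w} ⊆ e ∩ f := by
    intro x hx
    rcases mem_insert.1 hx with rfl | hx <;> simp_all
  have hge : 2 ≤ #(e ∩ f) := (card_pair hvw).symm.trans_le (card_le_card hpair)
  have hle := hlin e he.1 f hf.1 hef
  omega

lemma sum_hDeg_eq_sum_card_inter (S : Finset V) : ∑ w ∈ S, hDeg E w = ∑ e ∈ E, #(e ∩ S) := by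
  simp only [hDeg, ← filter_mem_eq_inter (s := S), inter_comm]
  exact sum_card_bipartiteAbove_eq_sum_card_bipartiteBelow (fun w e => w ∈ e)

lemma sum_card_inter_eq_sum_eCount {k : ℕ} (hcard : ∀ e ∈ E, #e ≤ k) (S : Finset V) :
    ∑ e ∈ E, #(e ∩ S) = ∑ i ∈ Icc 1 k, i * eCount E S i := by
  have hmaps : ∀ e ∈ E, #(e ∩ S) ∈ Icc 0 k := fun e he =>
    mem_Icc.2 ⟨Nat.zero_le _, (card_le_card inter_subset_left).trans (hcard e he)⟩
  calc ∑ e ∈ E, #(e ∩ S) = ∑ i ∈ Icc 0 k, ∑ e ∈ E with #(e ∩ S) = i, i :=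
        (sum_fiberwise_of_maps_to' hmaps fun i => i).symm
    _ = ∑ i ∈ Icc 0 k, i * eCount E S i := by
        simp only [sum_const, smul_eq_mul, eCount, mul_comm]
    _ = ∑ i ∈ Icc 1 k, i * eCount E S i := by
        rw [Icc_eq_cons_Ioc (Nat.zero_le k), sum_cons, zero_mul, zero_add,
          ← Icc_add_one_left_eq_Ioc, zero_add]

variable [Fintype V]

lemma card_filter_mem_mem_ne_eq_ite (hlin : ∀ e ∈ E, ∀ f ∈ E, e ≠ f → #(e ∩ f) ≤ 1) (v w : V) :
    #{e ∈ E | v ∈ e ∧ w ∈ e ∧ w ≠ v} = if w ∈ hNbhd E v then 1 else 0 := by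
  by_cases hwv : w = v
  · simp [hwv, hNbhd]
  have hle := card_filter_mem_mem_le_one hlin (Ne.symm hwv)
  simp only [hwv, ne_eq, not_false_eq_true, and_true, hNbhd, mem_filter, mem_univ, true_and]
  split_ifs with hw
  · obtain ⟨e, he, hv, hw⟩ := hw
    have : 0 < #{e ∈ E | v ∈ e ∧ w ∈ e} := card_pos.2 ⟨e, mem_filter.2 ⟨he, hv, hw⟩⟩
    omega
  · rw [card_eq_zero, filter_eq_empty_iff]
    exact fun e he hvw => hw ⟨e, he, hvw⟩

def bergeWalksOne (E : Finset (Finset V)) (w : V) : Finset (Finset V × V) :=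
  {p ∈ E ×ˢ univ | w ∈ p.1 ∧ p.2 ∈ p.1 ∧ p.2 ≠ w}

lemma card_bergeWalksOne (w : V) : #(bergeWalksOne E w) = ∑ e ∈ E with w ∈ e, (#e - 1) := by
  rw [bergeWalksOne, card_filter_product_eq_sum, sum_filter]
  refine sum_congr rfl fun e _ => ?_
  split_ifs with hw
  · rw [← card_erase_of_mem hw]
    congr 1
    ext x
    simp [hw, and_comm]
  · simp [hw]

lemma card_bergeWalksOne_of_uniform {k : ℕ} (hunif : ∀ e ∈ E, #e = k) (w : V) :
    #(bergeWalksOne E w) = (k - 1) * hDeg E w := by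
  rw [card_bergeWalksOne, sum_congr rfl fun e he => by rw [hunif e (mem_filter.1 he).1],
    sum_const, smul_eq_mul, mul_comm, hDeg]

lemma card_bergeWalks_two_eq_sum (hlin : ∀ e ∈ E, ∀ f ∈ E, e ≠ f → #(e ∩ f) ≤ 1) (v : V) :
    #{p ∈ E ×ˢ (univ : Finset V) ×ˢ E ×ˢ (univ : Finset V) | v ∈ p.1 ∧ p.2.1 ∈ p.1 ∧ p.2.1 ≠ v ∧
        p.2.1 ∈ p.2.2.1 ∧ p.2.2.2 ∈ p.2.2.1 ∧ p.2.2.2 ≠ p.2.1}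
      = ∑ w ∈ hNbhd E v, #(bergeWalksOne E w) := by
  have hsplit : ∀ (e : Finset V) (w : V),
      #{q ∈ E ×ˢ univ | v ∈ e ∧ w ∈ e ∧ w ≠ v ∧ w ∈ q.1 ∧ q.2 ∈ q.1 ∧ q.2 ≠ w}
        = if v ∈ e ∧ w ∈ e ∧ w ≠ v then #(bergeWalksOne E w) else 0 := by
    intro e w
    split_ifs with h
    · simp only [h, true_and, ne_eq, not_false_eq_true, bergeWalksOne]
    · rw [card_eq_zero, filter_eq_empty_iff]
      exact fun q _ hq => h ⟨hq.1, hq.2.1, hq.2.2.1⟩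
  calc _ = ∑ e ∈ E, ∑ w, if v ∈ e ∧ w ∈ e ∧ w ≠ v then #(bergeWalksOne E w) else 0 := by
          simp only [card_filter_product_eq_sum, hsplit]
    _ = ∑ w, #{e ∈ E | v ∈ e ∧ w ∈ e ∧ w ≠ v} * #(bergeWalksOne E w) := by
          rw [sum_comm]
          simp only [← sum_filter, sum_const, smul_eq_mul]
    _ = ∑ w ∈ hNbhd E v, #(bergeWalksOne E w) := by
          simp only [card_filter_mem_mem_ne_eq_ite hlin, boole_mul, sum_ite_mem, univ_inter]

end

theorem berge_walks_length_two_general {V : Type*} [Fintype V] [DecidableEq V]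
    (E : Finset (Finset V)) (k : ℕ)
    (hunif : ∀ e ∈ E, e.card = k)
    (hlin : ∀ e ∈ E, ∀ f ∈ E, e ≠ f → (e ∩ f).card ≤ 1)
    (v : V) :
    ((E ×ˢ (Finset.univ : Finset V) ×ˢ E ×ˢ (Finset.univ : Finset V)).filter
        (fun p => v ∈ p.1 ∧ p.2.1 ∈ p.1 ∧ p.2.1 ≠ v ∧
          p.2.1 ∈ p.2.2.1 ∧ p.2.2.2 ∈ p.2.2.1 ∧ p.2.2.2 ≠ p.2.1)).card
      = (k - 1) * ∑ i ∈ Finset.Icc 1 k, i * eCount E (hNbhd E v) i := by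
  rw [card_bergeWalks_two_eq_sum hlin,
    sum_congr rfl fun w _ => card_bergeWalksOne_of_uniform hunif w, ← mul_sum,
    sum_hDeg_eq_sum_card_inter, sum_card_inter_eq_sum_eCount fun e he => (hunif e he).le]

/-- In a connected linear `k`-uniform hypergraph (`k ≥ 3`), the number of Berge
walks of length 2 starting at `v` equals `(k-1)·Σ_{i=1}^{k} i·e_i(N_v)`. -/
theorem berge_walks_length_two {V : Type*} [Fintype V] [DecidableEq V]
    (E : Finset (Finset V)) (k : ℕ) (hk : 3 ≤ k)
    (hunif : ∀ e ∈ E, e.card = k)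
    (hlin : ∀ e ∈ E, ∀ f ∈ E, e ≠ f → (e ∩ f).card ≤ 1)
    (hconn : ∀ u v : V, Relation.ReflTransGen (fun a b => ∃ e ∈ E, a ∈ e ∧ b ∈ e) u v)
    (v : V) :
    ((E ×ˢ (Finset.univ : Finset V) ×ˢ E ×ˢ (Finset.univ : Finset V)).filter
        (fun p => v ∈ p.1 ∧ p.2.1 ∈ p.1 ∧ p.2.1 ≠ v ∧
          p.2.1 ∈ p.2.2.1 ∧ p.2.2.2 ∈ p.2.2.1 ∧ p.2.2.2 ≠ p.2.1)).card
      = (k - 1) * ∑ i ∈ Finset.Icc 1 k, i * eCount E (hNbhd E v) i :=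
  berge_walks_length_two_general E k hunif hlin v
end

section
/- Let H be a connected linear 3-uniform hypergraph on n vertices containing no Berge cycle of length l, l ≥ 5, and let u be any vertex. Then 2·e_2(N_u) + 3·e_3(N_u) ≤ (6l - 13)·d_u, where e_i(N_u) is the number of edges of H meeting the neighborhood N_u of u in exactly i vertices. -/
/-!
Edges through `u` meet `N_u` in exactly two vertices, and by linearity `|N_u| = 2 d_u`; so it
suffices to show that at most `(l - 3) |N_u|` edges avoid `u` and meet `N_u` in at least two
vertices. Choose a pair inside `N_u` in each such edge: by linearity the pairs are distinct,
and the bound follows once the graph they form is `(l - 3)`-degenerate. Otherwise some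
subgraph has minimum degree at least `l - 2`, and a longest path in it has at least `l - 1`
vertices, with all neighbours of its first vertex on it. Joining `l - 1` consecutive path
vertices to `u` through edges containing `u` closes a Berge `C_l` unless both ends lie in one
edge with `u`; as edges have three vertices, shifting the window, rerouting through that edge,
or (for a path of exactly `l - 1` vertices) using the edge joining its ends always succeeds.
-/

attribute [local instance] Classical.propDecidable

/-- `H` contains no Berge cycle of length `l`: there are no `l` distinct vertices
and `l` distinct edges with `{v_i, v_{i+1}} ⊆ e_i` cyclically. -/
def BergeCycleFree {V : Type*} (E : Finset (Finset V)) (l : ℕ) : Prop :=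
  ¬ ∃ (v : Fin l → V) (e : Fin l → Finset V),
      Function.Injective v ∧ Function.Injective e ∧
      ∀ i : Fin l, e i ∈ E ∧ v i ∈ e i ∧ v ⟨(i.val + 1) % l, Nat.mod_lt _ i.pos⟩ ∈ e i

section BergePath

variable {V α : Type*}

def consSeq (a : α) (f : ℕ → α) : ℕ → α
  | 0 => a
  | n + 1 => f n

@[simp] theorem consSeq_zero (a : α) (f : ℕ → α) : consSeq a f 0 = a := rfl

@[simp] theorem consSeq_succ (a : α) (f : ℕ → α) (n : ℕ) : consSeq a f (n + 1) = f n := rfl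

/-- `v 0, e 0, v 1, …, e (k-1), v k` is a Berge path in `E`; values of `v` and `e` at larger
indices play no role. -/
structure IsBergePath (E : Finset (Finset V)) (k : ℕ) (v : ℕ → V) (e : ℕ → Finset V) :
    Prop where
  injOn_vert : Set.InjOn v (Set.Iic k)
  injOn_edge : Set.InjOn e (Set.Iio k)
  edge_mem : ∀ i < k, e i ∈ E
  vert_mem : ∀ i < k, v i ∈ e i
  succ_vert_mem : ∀ i < k, v (i + 1) ∈ e i

namespace IsBergePath

variable {E : Finset (Finset V)} {k : ℕ} {v : ℕ → V} {e : ℕ → Finset V}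

theorem vert_inj (hP : IsBergePath E k v e) {i j : ℕ} (hi : i ≤ k) (hj : j ≤ k) :
    v i = v j ↔ i = j :=
  ⟨fun h => hP.injOn_vert (Set.mem_Iic.2 hi) (Set.mem_Iic.2 hj) h, fun h => h ▸ rfl⟩

theorem edge_inj (hP : IsBergePath E k v e) {i j : ℕ} (hi : i < k) (hj : j < k) :
    e i = e j ↔ i = j :=
  ⟨fun h => hP.injOn_edge (Set.mem_Iio.2 hi) (Set.mem_Iio.2 hj) h, fun h => h ▸ rfl⟩

theorem take (hP : IsBergePath E k v e) {m : ℕ} (h : m ≤ k) : IsBergePath E m v e where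
  injOn_vert := hP.injOn_vert.mono (Set.Iic_subset_Iic.2 h)
  injOn_edge := hP.injOn_edge.mono (Set.Iio_subset_Iio h)
  edge_mem i hi := hP.edge_mem i (by omega)
  vert_mem i hi := hP.vert_mem i (by omega)
  succ_vert_mem i hi := hP.succ_vert_mem i (by omega)

theorem shift (hP : IsBergePath E k v e) {a m : ℕ} (h : a + m ≤ k) :
    IsBergePath E m (fun i => v (a + i)) (fun i => e (a + i)) where
  injOn_vert i hi j hj hij := by
    simp only [Set.mem_Iic] at hi hj
    have := (hP.vert_inj (by omega) (by omega)).1 hij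
    omega
  injOn_edge i hi j hj hij := by
    simp only [Set.mem_Iio] at hi hj
    have := (hP.edge_inj (by omega) (by omega)).1 hij
    omega
  edge_mem i hi := hP.edge_mem _ (by omega)
  vert_mem i hi := hP.vert_mem _ (by omega)
  succ_vert_mem i hi := hP.succ_vert_mem _ (by omega)

theorem reverse (hP : IsBergePath E k v e) :
    IsBergePath E k (fun i => v (k - i)) (fun i => e (k - 1 - i)) where
  injOn_vert i hi j hj hij := by
    simp only [Set.mem_Iic] at hi hj
    have := (hP.vert_inj (by omega) (by omega)).1 hij
    omega
  injOn_edge i hi j hj hij := by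
    simp only [Set.mem_Iio] at hi hj
    have := (hP.edge_inj (by omega) (by omega)).1 hij
    omega
  edge_mem i hi := hP.edge_mem _ (by omega)
  vert_mem i hi := by
    have := hP.succ_vert_mem (k - 1 - i) (by omega)
    rwa [show k - 1 - i + 1 = k - i by omega] at this
  succ_vert_mem i hi := by
    rw [show k - (i + 1) = k - 1 - i by omega]
    exact hP.vert_mem _ (by omega)

theorem cons (hP : IsBergePath E k v e) {a : V} {g : Finset V} (ha : ∀ i ≤ k, v i ≠ a)
    (hg : ∀ i < k, e i ≠ g) (hgE : g ∈ E) (hag : a ∈ g) (hvg : v 0 ∈ g) :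
    IsBergePath E (k + 1) (consSeq a v) (consSeq g e) where
  injOn_vert i hi j hj hij := by
    simp only [Set.mem_Iic] at hi hj
    rcases i with _ | i <;> rcases j with _ | j
    · rfl
    · exact absurd hij.symm (ha j (by omega))
    · exact absurd hij (ha i (by omega))
    · simp only [consSeq_succ] at hij
      rw [(hP.vert_inj (by omega) (by omega)).1 hij]
  injOn_edge i hi j hj hij := by
    simp only [Set.mem_Iio] at hi hj
    rcases i with _ | i <;> rcases j with _ | j
    · rfl
    · exact absurd hij.symm (hg j (by omega))
    · exact absurd hij (hg i (by omega))
    · simp only [consSeq_succ] at hij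
      rw [(hP.edge_inj (by omega) (by omega)).1 hij]
  edge_mem i hi := by
    rcases i with _ | i
    exacts [hgE, hP.edge_mem i (by omega)]
  vert_mem i hi := by
    rcases i with _ | i
    exacts [hag, hP.vert_mem i (by omega)]
  succ_vert_mem i hi := by
    rcases i with _ | i
    exacts [hvg, hP.succ_vert_mem i (by omega)]

theorem reroute (hP : IsBergePath E k v e) {m : ℕ} (hm : 2 ≤ m) (hmk : m ≤ k) {g : Finset V}
    (hgE : g ∈ E) (hg0 : v 0 ∈ g) (hgm : v m ∈ g) (hg : ∀ i < m, e i ≠ g) :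
    IsBergePath E m (consSeq (v 1) (consSeq (v 0) fun i => v (m - i)))
      (consSeq (e 0) (consSeq g fun i => e (m - 1 - i))) := by
  have hR := (hP.take hmk).reverse.take (m := m - 2) (by omega)
  have hQ := (hR.cons (a := v 0) (g := g) (fun i hi => ?_) (fun i hi => hg _ (by omega)) hgE
    hg0 (by simpa using hgm)).cons (a := v 1) (g := e 0) (fun i hi => ?_) (fun i hi => ?_)
    (hP.edge_mem 0 (by omega)) (hP.succ_vert_mem 0 (by omega)) (hP.vert_mem 0 (by omega))
  · rwa [show m - 2 + 1 + 1 = m by omega] at hQ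
  · rw [Ne, hP.vert_inj (by omega) (by omega)]
    omega
  · rcases i with _ | i
    all_goals
      simp only [consSeq_zero, consSeq_succ]
      rw [Ne, hP.vert_inj (by omega) (by omega)]
      omega
  · rcases i with _ | i
    · exact (hg 0 (by omega)).symm
    · simp only [consSeq_succ]
      rw [Ne, hP.edge_inj (by omega) (by omega)]
      omega

theorem not_bergeCycleFree (hP : IsBergePath E k v e) {g : Finset V} (hgE : g ∈ E)
    (hg : ∀ i < k, e i ≠ g) (hvk : v k ∈ g) (hv0 : v 0 ∈ g) : ¬BergeCycleFree E (k + 1) := by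
  refine not_not.2 ⟨fun i => v i, fun i => if (i : ℕ) = k then g else e i, ?_, ?_, ?_⟩
  · intro i j hij
    exact Fin.ext ((hP.vert_inj (by omega) (by omega)).1 hij)
  · intro i j hij
    have hi := i.isLt
    have hj := j.isLt
    apply Fin.ext
    simp only at hij
    split_ifs at hij with hik hjk hjk
    · omega
    · exact absurd hij.symm (hg j (by omega))
    · exact absurd hij (hg i (by omega))
    · exact (hP.edge_inj (by omega) (by omega)).1 hij
  · intro i
    have hi := i.isLt
    by_cases hik : (i : ℕ) = k
    · simp only [hik, if_true, Nat.mod_self]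
      exact ⟨hgE, hvk, hv0⟩
    · have hnext : ((i : ℕ) + 1) % (k + 1) = i + 1 := Nat.mod_eq_of_lt (by omega)
      simp only [hik, if_false, hnext]
      exact ⟨hP.edge_mem i (by omega), hP.vert_mem i (by omega), hP.succ_vert_mem i (by omega)⟩

theorem not_bergeCycleFree_of_cone (hP : IsBergePath E k v e) {u : V} (hu : ∀ i ≤ k, v i ≠ u)
    {f₀ f₁ : Finset V} (hf₀ : f₀ ∈ E) (hf₁ : f₁ ∈ E) (hu₀ : u ∈ f₀) (hv₀ : v 0 ∈ f₀)
    (hu₁ : u ∈ f₁) (hv₁ : v k ∈ f₁) (hne : f₀ ≠ f₁) (he₀ : ∀ i < k, e i ≠ f₀)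
    (he₁ : ∀ i < k, e i ≠ f₁) : ¬BergeCycleFree E (k + 2) := by
  refine (hP.cons hu he₀ hf₀ hu₀ hv₀).not_bergeCycleFree hf₁ (fun i hi => ?_) hv₁ hu₁
  rcases i with _ | i
  exacts [hne, he₁ i (by omega)]

end IsBergePath

end BergePath

section Hub

variable {V : Type*} [DecidableEq V]

theorem Finset.eq_or_eq_or_eq_of_card_eq_three {t : Finset V} (ht : t.card = 3) {a b c x : V}
    (ha : a ∈ t) (hb : b ∈ t) (hc : c ∈ t) (hab : a ≠ b) (hac : a ≠ c) (hbc : b ≠ c)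
    (hx : x ∈ t) : x = a ∨ x = b ∨ x = c := by
  have habc : ({a, b, c} : Finset V) = t := by
    refine Finset.eq_of_subset_of_card_le (by simp [Finset.insert_subset_iff, *]) ?_
    rw [ht, Finset.card_insert_of_notMem (by simp [hab, hac]),
      Finset.card_pair hbc]
  simpa [← habc] using hx

variable {E : Finset (Finset V)} {u : V} {k l : ℕ} {w : ℕ → V} {h : ℕ → Finset V}

theorem IsBergePath.eq_or_eq_of_vert_mem (hP : IsBergePath E k w h) (hwu : ∀ i ≤ k, w i ≠ u)
    {g : Finset V} (hg : g.card = 3) (hug : u ∈ g) {a b : ℕ} (ha : a ≤ k) (hb : b ≤ k)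
    (hab : a ≠ b) (hwa : w a ∈ g) (hwb : w b ∈ g) {j : ℕ} (hj : j ≤ k) (hwj : w j ∈ g) :
    j = a ∨ j = b := by
  rcases Finset.eq_or_eq_or_eq_of_card_eq_three hg hug hwa hwb (hwu a ha).symm (hwu b hb).symm
    (by rwa [Ne, hP.vert_inj ha hb]) hwj with hj' | hj' | hj'
  · exact absurd hj' (hwu j hj)
  · exact Or.inl ((hP.vert_inj hj ha).1 hj')
  · exact Or.inr ((hP.vert_inj hj hb).1 hj')

variable [Fintype V]

theorem mem_hNbhd {x : V} : x ∈ hNbhd E u ↔ x ≠ u ∧ ∃ e ∈ E, u ∈ e ∧ x ∈ e := by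
  simp [hNbhd]

namespace IsBergePath

theorem not_bergeCycleFree_of_ends (hP : IsBergePath E k w h)
    (hN : ∀ i ≤ k, w i ∈ hNbhd E u) (hu : ∀ i < k, u ∉ h i)
    (hends : ¬∃ g ∈ E, u ∈ g ∧ w 0 ∈ g ∧ w k ∈ g) : ¬BergeCycleFree E (k + 2) := by
  obtain ⟨-, f₀, hf₀, hu₀, hw₀⟩ := mem_hNbhd.1 (hN 0 (Nat.zero_le _))
  obtain ⟨-, f₁, hf₁, hu₁, hw₁⟩ := mem_hNbhd.1 (hN k le_rfl)
  refine hP.not_bergeCycleFree_of_cone (fun i hi => (mem_hNbhd.1 (hN i hi)).1)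
    hf₀ hf₁ hu₀ hw₀ hu₁ hw₁ ?_ (fun i hi he => hu i hi (he ▸ hu₀))
    (fun i hi he => hu i hi (he ▸ hu₁))
  rintro rfl
  exact hends ⟨f₀, hf₀, hu₀, hw₀, hw₁⟩

theorem not_bergeCycleFree_of_long (hunif : ∀ e ∈ E, e.card = 3) (hl : 5 ≤ l)
    (hP : IsBergePath E k w h) (hk : l - 1 ≤ k) (hN : ∀ i ≤ k, w i ∈ hNbhd E u)
    (hu : ∀ i < k, u ∉ h i) : ¬BergeCycleFree E l := by
  obtain ⟨n, rfl⟩ : ∃ n, l = n + 5 := ⟨l - 5, by omega⟩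
  have hwu : ∀ i ≤ k, w i ≠ u := fun i hi => (mem_hNbhd.1 (hN i hi)).1
  by_cases h₀ : ∃ g ∈ E, u ∈ g ∧ w 0 ∈ g ∧ w (n + 3) ∈ g
  swap
  · exact (hP.take (by omega)).not_bergeCycleFree_of_ends (fun i hi => hN i (by omega))
      (fun i hi => hu i (by omega)) h₀
  by_cases h₁ : ∃ g ∈ E, u ∈ g ∧ w 1 ∈ g ∧ w (n + 4) ∈ g
  swap
  · refine (hP.shift (a := 1) (m := n + 3) (by omega)).not_bergeCycleFree_of_ends
      (fun i hi => hN _ (by omega)) (fun i hi => hu _ (by omega)) ?_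
    simpa [show 1 + (n + 3) = n + 4 by omega] using h₁
  -- Both windows end in an edge through `u`; use the cycle `u, w 1, w 0, w (n+3), …, w 2` instead.
  obtain ⟨g₀, hg₀E, hug₀, hw0g₀, hwg₀⟩ := h₀
  obtain ⟨g₁, hg₁E, hug₁, hw1g₁, hwg₁⟩ := h₁
  obtain ⟨-, f, hfE, huf, hw2f⟩ := mem_hNbhd.1 (hN 2 (by omega))
  have hg₀ : ∀ j ≤ k, w j ∈ g₀ → j = 0 ∨ j = n + 3 := fun j hj =>
    hP.eq_or_eq_of_vert_mem hwu (hunif g₀ hg₀E) hug₀ (by omega) (by omega) (by omega) hw0g₀ hwg₀ hj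
  have hg₁ : ∀ j ≤ k, w j ∈ g₁ → j = 1 ∨ j = n + 4 := fun j hj =>
    hP.eq_or_eq_of_vert_mem hwu (hunif g₁ hg₁E) hug₁ (by omega) (by omega) (by omega) hw1g₁ hwg₁ hj
  have hQ := hP.reroute (m := n + 3) (by omega) (by omega) hg₀E hw0g₀ hwg₀
    (fun i hi he => hu i (by omega) (he ▸ hug₀))
  have hQe : ∀ i < n + 3, ∀ g, u ∈ g → g ≠ g₀ →
      consSeq (h 0) (consSeq g₀ fun i => h (n + 3 - 1 - i)) i ≠ g := by
    rintro (_ | _ | i) hi g hug hgg₀ he <;> simp only [consSeq_zero, consSeq_succ] at he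
    · exact hu 0 (by omega) (he ▸ hug)
    · exact hgg₀ he.symm
    · exact hu _ (by omega) (he ▸ hug)
  refine hQ.not_bergeCycleFree_of_cone (u := u) ?_ hg₁E hfE hug₁ hw1g₁ huf ?_ ?_
    (fun i hi => hQe i hi g₁ hug₁ ?_) (fun i hi => hQe i hi f huf ?_)
  · rintro (_ | _ | i) hi
    all_goals exact hwu _ (by omega)
  · simpa [show n + 3 - (n + 1) = 2 by omega] using hw2f
  · rintro rfl
    have := hg₁ 2 (by omega) hw2f
    omega
  · rintro rfl
    have := hg₀ 1 (by omega) hw1g₁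
    omega
  · rintro rfl
    have := hg₀ 2 (by omega) hw2f
    omega

theorem not_bergeCycleFree_of_closing_edge (hunif : ∀ e ∈ E, e.card = 3) (hl : 5 ≤ l)
    (hP : IsBergePath E (l - 2) w h) (hN : ∀ i ≤ l - 2, w i ∈ hNbhd E u)
    (hu : ∀ i < l - 2, u ∉ h i) {c : Finset V} (hcE : c ∈ E) (hcu : u ∉ c)
    (hc0 : w 0 ∈ c) (hcl : w (l - 2) ∈ c) (hch : ∀ i < l - 2, h i ≠ c) :
    ¬BergeCycleFree E l := by
  obtain ⟨n, rfl⟩ : ∃ n, l = n + 5 := ⟨l - 5, by omega⟩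
  have hwu : ∀ i ≤ n + 3, w i ≠ u := fun i hi => (mem_hNbhd.1 (hN i hi)).1
  by_cases h₀ : ∃ g ∈ E, u ∈ g ∧ w 0 ∈ g ∧ w (n + 3) ∈ g
  swap
  · exact hP.not_bergeCycleFree_of_ends hN hu h₀
  obtain ⟨g₀, hg₀E, hug₀, hw0g₀, hwg₀⟩ := h₀
  obtain ⟨-, f, hfE, huf, hw1f⟩ := mem_hNbhd.1 (hN 1 (by omega))
  -- Close the cycle `u, w 0, w (n+3), w (n+2), …, w 1` instead.
  have hQ := (hP.reverse.take (m := n + 2) (by omega)).cons (a := w 0) (g := c)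
    (fun i hi => by rw [Ne, hP.vert_inj (by omega) (by omega)]; omega)
    (fun i hi => hch _ (by omega)) hcE hc0 (by simpa using hcl)
  have hQe : ∀ i < n + 3, ∀ g, u ∈ g → consSeq c (fun i => h (n + 5 - 2 - 1 - i)) i ≠ g := by
    rintro (_ | i) hi g hug he <;> simp only [consSeq_zero, consSeq_succ] at he
    · exact hcu (he ▸ hug)
    · exact hu _ (by omega) (he ▸ hug)
  refine hQ.not_bergeCycleFree_of_cone (u := u) ?_ hg₀E hfE hug₀ hw0g₀ huf ?_ ?_
    (fun i hi => hQe i hi g₀ hug₀) (fun i hi => hQe i hi f huf)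
  · rintro (_ | i) hi
    all_goals exact hwu _ (by omega)
  · simpa [show n + 3 - (n + 2) = 1 by omega] using hw1f
  · intro he
    have := hP.eq_or_eq_of_vert_mem hwu (hunif g₀ hg₀E) hug₀ (a := 0) (b := n + 3) (by omega)
      (by omega) (by omega) hw0g₀ hwg₀ (j := 1) (by omega) (he ▸ hw1f)
    omega

end IsBergePath

end Hub

namespace SimpleGraph

variable {V : Type*} {G : SimpleGraph V}

theorem exists_isPath_forall_adj_mem_support [Fintype V] {a b : V} (p : G.Walk a b)
    (hp : p.IsPath) :
    ∃ a' : V, ∃ q : G.Walk a' b, q.IsPath ∧ ∀ y, G.Adj a' y → y ∈ q.support := by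
  by_cases hmax : ∀ y, G.Adj a y → y ∈ p.support
  · exact ⟨a, p, hp, hmax⟩
  push Not at hmax
  obtain ⟨y, hay, hy⟩ := hmax
  exact exists_isPath_forall_adj_mem_support (p.cons hay.symm) (hp.cons hy)
termination_by Fintype.card V - p.length
decreasing_by
  have := (hp.cons (h := hay.symm) hy).length_lt
  simp only [Walk.length_cons] at this ⊢
  omega

theorem Walk.IsPath.getVert_pair_eq [DecidableEq V] {a b : V} {q : G.Walk a b} (hq : q.IsPath)
    {i i' j j' : ℕ} (hi : i ≤ q.length) (hi' : i' ≤ q.length) (hj : j ≤ q.length)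
    (hj' : j' ≤ q.length)
    (h : ({q.getVert i, q.getVert i'} : Finset V) = {q.getVert j, q.getVert j'}) :
    i = j ∧ i' = j' ∨ i = j' ∧ i' = j := by
  have h' := congrArg (fun s : Finset V => (s : Set V)) h
  simp only [Finset.coe_pair] at h'
  rcases Set.pair_eq_pair_iff.1 h' with ⟨h₁, h₂⟩ | ⟨h₁, h₂⟩
  · exact Or.inl ⟨hq.getVert_injOn hi hj h₁, hq.getVert_injOn hi' hj' h₂⟩
  · exact Or.inr ⟨hq.getVert_injOn hi hj' h₁, hq.getVert_injOn hi' hj h₂⟩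

end SimpleGraph

section PairGraph

variable {V : Type*} [DecidableEq V]

def pairGraph (C : Finset (Finset V)) (σ : Finset V → Finset V) : SimpleGraph V where
  Adj x y := x ≠ y ∧ ∃ b ∈ C, σ b = {x, y}
  symm := ⟨fun _ _ ⟨hxy, b, hb, hσ⟩ => ⟨hxy.symm, b, hb, by rw [hσ, Finset.pair_comm]⟩⟩
  loopless := ⟨fun _ ⟨hxx, _⟩ => hxx rfl⟩

variable {C E : Finset (Finset V)} {σ : Finset V → Finset V}

@[simp] theorem pairGraph_adj {x y : V} :
    (pairGraph C σ).Adj x y ↔ x ≠ y ∧ ∃ b ∈ C, σ b = {x, y} := Iff.rfl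

theorem pairGraph.card_filter_mem_le (hσ : Set.InjOn σ C) (hσ2 : ∀ b ∈ C, (σ b).card = 2)
    {a : V} {T : Finset V} (hT : ∀ y, (pairGraph C σ).Adj a y → y ∈ T) :
    (C.filter (a ∈ σ ·)).card ≤ T.card := by
  refine Finset.card_le_card_of_forall_subsingleton (fun b y => σ b = {a, y}) ?_ ?_
  · intro b hb
    obtain ⟨hbC, hab⟩ := Finset.mem_filter.1 hb
    obtain ⟨x, z, hxz, hσb⟩ := Finset.card_eq_two.1 (hσ2 b hbC)
    rw [hσb, Finset.mem_insert, Finset.mem_singleton] at hab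
    rcases hab with rfl | rfl
    · exact ⟨z, hT z (pairGraph_adj.2 ⟨hxz, b, hbC, hσb⟩), hσb⟩
    · rw [Finset.pair_comm] at hσb
      exact ⟨x, hT x (pairGraph_adj.2 ⟨hxz.symm, b, hbC, hσb⟩), hσb⟩
  · intro y _ b hb b' hb'
    exact hσ (Finset.mem_filter.1 hb.1).1 (Finset.mem_filter.1 hb'.1).1 (hb.2.trans hb'.2.symm)

theorem pairGraph.isBergePath (hCE : C ⊆ E) (hσb : ∀ b ∈ C, σ b ⊆ b)
    {a x : V} (q : (pairGraph C σ).Walk a x) (hq : q.IsPath) :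
    ∃ h : ℕ → Finset V, IsBergePath E q.length q.getVert h ∧
      ∀ i < q.length, h i ∈ C ∧ σ (h i) = {q.getVert i, q.getVert (i + 1)} := by
  have hex : ∀ i, ∃ b, i < q.length → b ∈ C ∧ σ b = {q.getVert i, q.getVert (i + 1)} := by
    intro i
    by_cases hi : i < q.length
    · obtain ⟨-, b, hb, hσb⟩ := pairGraph_adj.1 (q.adj_getVert_succ hi)
      exact ⟨b, fun _ => ⟨hb, hσb⟩⟩
    · exact ⟨∅, fun h => absurd h hi⟩
  choose h hh using hex
  have hmem : ∀ i < q.length, q.getVert i ∈ h i ∧ q.getVert (i + 1) ∈ h i := fun i hi =>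
    ⟨hσb _ (hh i hi).1 (by simp [(hh i hi).2]), hσb _ (hh i hi).1 (by simp [(hh i hi).2])⟩
  refine ⟨h, ⟨fun i hi j hj hij => hq.getVert_injOn hi hj hij, fun i hi j hj hij => ?_,
    fun i hi => hCE (hh i hi).1, fun i hi => (hmem i hi).1, fun i hi => (hmem i hi).2⟩, hh⟩
  simp only [Set.mem_Iio] at hi hj
  have := hq.getVert_pair_eq (by omega) (by omega) (by omega) (by omega)
    ((hh i hi).2.symm.trans (hij ▸ (hh j hj).2))
  omega

theorem pairGraph.exists_long_isPath [Fintype V] (hσ2 : ∀ b ∈ C, (σ b).card = 2)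
    (hσ : Set.InjOn σ C) {W : Finset V} (hσW : ∀ b ∈ C, σ b ⊆ W) (hW : W.Nonempty) {c : ℕ}
    (hdeg : ∀ y ∈ W, c < (C.filter (y ∈ σ ·)).card) :
    ∃ a x, ∃ q : (pairGraph C σ).Walk a x, q.IsPath ∧ c + 1 ≤ q.length ∧
      (∀ i ≤ q.length, q.getVert i ∈ W) ∧ (q.length = c + 1 → (pairGraph C σ).Adj a x) := by
  obtain ⟨x, hx⟩ := hW
  obtain ⟨a, q, hq, hadj⟩ :=
    SimpleGraph.exists_isPath_forall_adj_mem_support (G := pairGraph C σ) SimpleGraph.Walk.nil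
      (SimpleGraph.Walk.IsPath.nil (u := x))
  have hqW : ∀ i ≤ q.length, q.getVert i ∈ W := by
    intro i hi
    rcases hi.lt_or_eq with hi | rfl
    · obtain ⟨-, b, hb, hσb⟩ := pairGraph_adj.1 (q.adj_getVert_succ hi)
      exact hσW b hb (by simp [hσb])
    · rwa [q.getVert_length]
  have hdeg_a := hdeg a (by simpa using hqW 0 (Nat.zero_le _))
  have hnbr : ∀ y, (pairGraph C σ).Adj a y → ∃ n, 1 ≤ n ∧ n ≤ q.length ∧ q.getVert n = y := by
    intro y hy
    obtain ⟨n, rfl, hn⟩ := SimpleGraph.Walk.mem_support_iff_exists_getVert.1 (hadj y hy)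
    refine ⟨n, Nat.one_le_iff_ne_zero.2 fun hn0 => hy.ne ?_, hn, rfl⟩
    rw [hn0, SimpleGraph.Walk.getVert_zero]
  have hlen : c + 1 ≤ q.length := by
    have := hdeg_a.trans_le (pairGraph.card_filter_mem_le hσ hσ2
      (T := (Finset.Icc 1 q.length).image q.getVert) fun y hy => by
        obtain ⟨n, hn1, hn, rfl⟩ := hnbr y hy
        exact Finset.mem_image_of_mem _ (Finset.mem_Icc.2 ⟨hn1, hn⟩))
    have := (Finset.card_image_le (s := Finset.Icc 1 q.length) (f := q.getVert)).trans_eq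
      (Nat.card_Icc 1 q.length)
    omega
  refine ⟨a, x, q, hq, hlen, hqW, fun hk => ?_⟩
  by_contra hax
  have := hdeg_a.trans_le (pairGraph.card_filter_mem_le hσ hσ2
    (T := (Finset.Ico 1 q.length).image q.getVert) fun y hy => by
      obtain ⟨n, hn1, hn, rfl⟩ := hnbr y hy
      refine Finset.mem_image_of_mem _ (Finset.mem_Ico.2 ⟨hn1, hn.lt_of_ne ?_⟩)
      rintro rfl
      exact hax (by rwa [q.getVert_length] at hy))
  have := (Finset.card_image_le (s := Finset.Ico 1 q.length) (f := q.getVert)).trans_eq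
    (Nat.card_Ico 1 q.length)
  omega

theorem pairGraph.exists_isBergePath [Fintype V] (hCE : C ⊆ E) (hσb : ∀ b ∈ C, σ b ⊆ b)
    (hσ2 : ∀ b ∈ C, (σ b).card = 2) (hσ : Set.InjOn σ C) {W : Finset V}
    (hσW : ∀ b ∈ C, σ b ⊆ W) (hW : W.Nonempty) {c : ℕ} (hc : 1 ≤ c)
    (hdeg : ∀ y ∈ W, c < (C.filter (y ∈ σ ·)).card) :
    ∃ k w h, c + 1 ≤ k ∧ IsBergePath E k w h ∧ (∀ i ≤ k, w i ∈ W) ∧ (∀ i < k, h i ∈ C) ∧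
      (k = c + 1 → ∃ b ∈ C, w 0 ∈ b ∧ w k ∈ b ∧ ∀ i < k, h i ≠ b) := by
  obtain ⟨a, x, q, hq, hlen, hqW, hax⟩ := pairGraph.exists_long_isPath hσ2 hσ hσW hW hdeg
  obtain ⟨h, hP, hh⟩ := pairGraph.isBergePath hCE hσb q hq
  refine ⟨q.length, q.getVert, h, hlen, hP, hqW, fun i hi => (hh i hi).1, fun hk => ?_⟩
  obtain ⟨-, b, hb, hσab⟩ := pairGraph_adj.1 (hax hk)
  have hσb' : σ b = {q.getVert 0, q.getVert q.length} := by
    rw [SimpleGraph.Walk.getVert_zero, SimpleGraph.Walk.getVert_length, hσab]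
  refine ⟨b, hb, hσb b hb (by simp [hσb']), hσb b hb (by simp [hσb']), fun i hi hib => ?_⟩
  have := hq.getVert_pair_eq (Nat.zero_le _) le_rfl (by omega) (by omega)
    (hσb'.symm.trans (hib ▸ (hh i hi).2))
  omega

end PairGraph

theorem Finset.card_le_mul_card_of_degenerate {α β : Type*} [DecidableEq β] (C : Finset α)
    (N : Finset β) (p : α → Finset β) (c : ℕ) (hpN : ∀ b ∈ C, p b ⊆ N)
    (hp : ∀ b ∈ C, (p b).Nonempty)
    (hdeg : ∀ W ⊆ N, W.Nonempty → ∃ x ∈ W, ((C.filter (p · ⊆ W)).filter (x ∈ p ·)).card ≤ c) :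
    C.card ≤ c * N.card := by
  suffices H : ∀ W ⊆ N, (C.filter (p · ⊆ W)).card ≤ c * W.card by
    simpa [Finset.filter_true_of_mem hpN] using H N subset_rfl
  intro W
  induction W using Finset.strongInduction with
  | H W ih =>
  intro hWN
  rcases W.eq_empty_or_nonempty with rfl | hW
  · rw [Finset.filter_false_of_mem fun b hb hbW =>
      (Finset.subset_empty.1 hbW ▸ hp b hb).ne_empty rfl]
    simp
  obtain ⟨x, hx, hxc⟩ := hdeg W hWN hW
  have hoff : (C.filter (p · ⊆ W)).filter (x ∉ p ·) ⊆ C.filter (p · ⊆ W.erase x) := by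
    intro b hb
    simp only [Finset.mem_filter] at hb ⊢
    exact ⟨hb.1.1, fun y hy => Finset.mem_erase.2 ⟨fun hyx => hb.2 (hyx ▸ hy), hb.1.2 hy⟩⟩
  have herase := ih (W.erase x) (Finset.erase_ssubset hx) ((W.erase_subset x).trans hWN)
  rw [Finset.card_erase_of_mem hx] at herase
  calc (C.filter (p · ⊆ W)).card
      = ((C.filter (p · ⊆ W)).filter (x ∈ p ·)).card
        + ((C.filter (p · ⊆ W)).filter (x ∉ p ·)).card :=
        (Finset.card_filter_add_card_filter_not _).symm
    _ ≤ c + c * (W.card - 1) := Nat.add_le_add hxc ((Finset.card_le_card hoff).trans herase)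
    _ = c * W.card := by rw [add_comm, ← Nat.mul_add_one, Nat.sub_add_cancel hW.card_pos]

section LinearHypergraph

variable {V : Type*} [DecidableEq V] {E : Finset (Finset V)}

theorem eq_of_two_le_card_inter (hlin : ∀ e ∈ E, ∀ f ∈ E, e ≠ f → (e ∩ f).card ≤ 1)
    {e f : Finset V} (he : e ∈ E) (hf : f ∈ E) (h : 2 ≤ (e ∩ f).card) : e = f := by
  by_contra hne
  have := hlin e he f hf hne
  omega

variable [Fintype V]

theorem card_hNbhd (hunif : ∀ e ∈ E, e.card = 3)
    (hlin : ∀ e ∈ E, ∀ f ∈ E, e ≠ f → (e ∩ f).card ≤ 1) (u : V) :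
    (hNbhd E u).card = 2 * hDeg E u := by
  have hN : hNbhd E u = (E.filter (u ∈ ·)).biUnion (·.erase u) := by
    ext x
    simp only [mem_hNbhd, Finset.mem_biUnion, Finset.mem_filter, Finset.mem_erase]
    aesop
  rw [hN, Finset.card_biUnion, Finset.sum_congr rfl fun e he => ?_, Finset.sum_const,
    smul_eq_mul, mul_comm, hDeg]
  · rw [Finset.mem_filter] at he
    rw [Finset.card_erase_of_mem he.2, hunif e he.1]
  · intro e he f hf hef
    simp only [Finset.coe_filter, Set.mem_ofPred_eq] at he hf
    refine Finset.disjoint_left.2 fun x hxe hxf => hef (eq_of_two_le_card_inter hlin he.1 hf.1 ?_)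
    rw [Finset.mem_erase] at hxe hxf
    calc 2 = ({u, x} : Finset V).card := (Finset.card_pair (Ne.symm hxe.1)).symm
      _ ≤ (e ∩ f).card := Finset.card_le_card (by simp [Finset.insert_subset_iff, *])

theorem eCount_two_add_eCount_three_le (hunif : ∀ e ∈ E, e.card = 3) (u : V) :
    2 * eCount E (hNbhd E u) 2 + 3 * eCount E (hNbhd E u) 3 ≤
      2 * hDeg E u + 3 * (E.filter fun e => u ∉ e ∧ 2 ≤ (e ∩ hNbhd E u).card).card := by
  set N := hNbhd E u
  set C := E.filter fun e => u ∉ e ∧ 2 ≤ (e ∩ N).card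
  have huN : u ∉ N := fun h => (mem_hNbhd.1 h).1 rfl
  have h₃ : eCount E N 3 ≤ C.card := by
    refine Finset.card_le_card fun e he => ?_
    rw [Finset.mem_filter] at he ⊢
    have heN : e ∩ N = e := Finset.eq_of_subset_of_card_le Finset.inter_subset_left
      (by rw [he.2, hunif e he.1])
    exact ⟨he.1, fun hue => huN (Finset.mem_inter.1 (heN.symm ▸ hue)).2, by omega⟩
  have h₂₃ : eCount E N 2 + eCount E N 3 ≤ hDeg E u + C.card := by
    rw [eCount, eCount, ← Finset.card_union_of_disjoint
      (Finset.disjoint_filter.2 fun e _ h₂ h₃ => by omega)]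
    refine (Finset.card_le_card fun e he => ?_).trans (Finset.card_union_le _ _)
    simp only [Finset.mem_union, Finset.mem_filter] at he ⊢
    by_cases hue : u ∈ e
    · exact Or.inl ⟨he.elim And.left And.left, hue⟩
    · exact Or.inr (Finset.mem_filter.2 ⟨he.elim And.left And.left, hue, by omega⟩)
  omega

theorem card_filter_le_of_bergeCycleFree (hunif : ∀ e ∈ E, e.card = 3)
    (hlin : ∀ e ∈ E, ∀ f ∈ E, e ≠ f → (e ∩ f).card ≤ 1) {l : ℕ} (hl : 5 ≤ l)
    (hfree : BergeCycleFree E l) (u : V) :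
    (E.filter fun e => u ∉ e ∧ 2 ≤ (e ∩ hNbhd E u).card).card ≤ (l - 3) * (hNbhd E u).card := by
  set N := hNbhd E u
  set C := E.filter fun e => u ∉ e ∧ 2 ≤ (e ∩ N).card
  have hσex : ∀ b ∈ C, ∃ t ⊆ b ∩ N, t.card = 2 := fun b hb =>
    Finset.exists_subset_card_eq (Finset.mem_filter.1 hb).2.2
  choose! σ hσ hσ2 using hσex
  have hσb : ∀ b ∈ C, σ b ⊆ b := fun b hb => (hσ b hb).trans Finset.inter_subset_left
  have hσinj : Set.InjOn σ C := fun b hb b' hb' hbb' =>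
    eq_of_two_le_card_inter hlin (Finset.mem_filter.1 hb).1 (Finset.mem_filter.1 hb').1 <|
      (hσ2 b hb).symm.le.trans <| Finset.card_le_card <|
        Finset.subset_inter (hσb b hb) (hbb' ▸ hσb b' hb')
  refine Finset.card_le_mul_card_of_degenerate C N σ (l - 3)
    (fun b hb => (hσ b hb).trans Finset.inter_subset_right)
    (fun b hb => Finset.card_pos.1 (by rw [hσ2 b hb]; omega)) fun W hWN hW => ?_
  by_contra! hdeg
  obtain ⟨k, w, h, hk, hP, hwW, hhC, hclose⟩ :=
    pairGraph.exists_isBergePath (E := E) (C := C.filter (σ · ⊆ W))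
      (Finset.filter_subset _ _ |>.trans (Finset.filter_subset _ _))
      (fun b hb => hσb b (Finset.mem_filter.1 hb).1)
      (fun b hb => hσ2 b (Finset.mem_filter.1 hb).1) (hσinj.mono (Finset.filter_subset _ _))
      (fun b hb => (Finset.mem_filter.1 hb).2) hW (by omega) hdeg
  have hCu : ∀ b ∈ C.filter (σ · ⊆ W), u ∉ b := fun b hb =>
    (Finset.mem_filter.1 (Finset.mem_filter.1 hb).1).2.1
  have hN : ∀ i ≤ k, w i ∈ N := fun i hi => hWN (hwW i hi)
  have hu : ∀ i < k, u ∉ h i := fun i hi => hCu _ (hhC i hi)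
  rcases hk.lt_or_eq with hk | hk
  · exact hP.not_bergeCycleFree_of_long hunif hl (by omega) hN hu hfree
  · obtain ⟨b, hb, hb0, hbk, hbh⟩ := hclose hk.symm
    obtain rfl : k = l - 2 := by omega
    exact hP.not_bergeCycleFree_of_closing_edge hunif hl hN hu
      (Finset.mem_filter.1 (Finset.mem_filter.1 hb).1).1 (hCu b hb) hb0 hbk hbh hfree

end LinearHypergraph

theorem eTwo_eThree_bound_general {V : Type*} [Fintype V] [DecidableEq V]
    (E : Finset (Finset V)) (l : ℕ) (hl : 5 ≤ l)
    (hunif : ∀ e ∈ E, e.card = 3)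
    (hlin : ∀ e ∈ E, ∀ f ∈ E, e ≠ f → (e ∩ f).card ≤ 1)
    (hfree : BergeCycleFree E l) (u : V) :
    2 * (eCount E (hNbhd E u) 2 : ℝ) + 3 * (eCount E (hNbhd E u) 3 : ℝ)
      ≤ (6 * (l : ℝ) - 13) * (hDeg E u : ℝ) := by
  have hcount := eCount_two_add_eCount_three_le hunif u
  have hC := card_filter_le_of_bergeCycleFree hunif hlin hl hfree u
  rw [card_hNbhd hunif hlin u] at hC
  have hkey : 2 * eCount E (hNbhd E u) 2 + 3 * eCount E (hNbhd E u) 3 + 13 * hDeg E u ≤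
      6 * l * hDeg E u := by
    obtain ⟨m, rfl⟩ : ∃ m, l = m + 5 := ⟨l - 5, by omega⟩
    rw [show m + 5 - 3 = m + 2 by omega] at hC
    nlinarith
  have := (Nat.cast_le (α := ℝ)).2 hkey
  push_cast at this
  linarith

/-- In a connected linear 3-uniform Berge-`C_l`-free hypergraph (`l ≥ 5`),
`2e_2(N_u) + 3e_3(N_u) ≤ (6l-13)·d_u`. -/
theorem eTwo_eThree_bound {V : Type*} [Fintype V] [DecidableEq V]
    (E : Finset (Finset V)) (l : ℕ) (hl : 5 ≤ l)
    (hunif : ∀ e ∈ E, e.card = 3)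
    (hlin : ∀ e ∈ E, ∀ f ∈ E, e ≠ f → (e ∩ f).card ≤ 1)
    (hconn : ∀ u v : V, Relation.ReflTransGen (fun a b => ∃ e ∈ E, a ∈ e ∧ b ∈ e) u v)
    (hfree : BergeCycleFree E l) (u : V) :
    2 * (eCount E (hNbhd E u) 2 : ℝ) + 3 * (eCount E (hNbhd E u) 3 : ℝ)
      ≤ (6 * (l : ℝ) - 13) * (hDeg E u : ℝ) :=
  eTwo_eThree_bound_general E l hl hunif hlin hfree u
end

section
/- Let H be a linear k-uniform hypergraph with no Berge-B_s (s ≥ 2, k ≥ 3), and let e = {u, i_2, ..., i_k} be an edge containing u. For v ∈ N_u set S_v = {w ∉ N_u ∪ {u} : w lies in some edge f with |f ∩ N_u| = 1 and v ∈ f}. Then |∪_{j=2}^{k} S_{i_j}| ≥ Σ_{j=2}^{k} |S_{i_j}| − C(k-1,2)·(2k-3)(s-1). -/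
attribute [local instance] Classical.propDecidable

/-- `H` contains no Berge-`B_s`, where `B_s` is the book of `s` triangles sharing a
common edge `{a,b}`: there do not exist distinct vertices `a, b, c_1, …, c_s` and
`2s+1` distinct hyperedges `e₀ ⊇ {a,b}`, `f i ⊇ {a, c i}`, `g i ⊇ {b, c i}`. -/
def BergeBookFree {V : Type*} (E : Finset (Finset V)) (s : ℕ) : Prop :=
  ¬ ∃ (a b : V) (c : Fin s → V) (e₀ : Finset V) (f g : Fin s → Finset V),
      a ≠ b ∧ Function.Injective c ∧ (∀ i, c i ≠ a ∧ c i ≠ b) ∧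
      e₀ ∈ E ∧ a ∈ e₀ ∧ b ∈ e₀ ∧
      (∀ i, f i ∈ E ∧ a ∈ f i ∧ c i ∈ f i) ∧
      (∀ i, g i ∈ E ∧ b ∈ g i ∧ c i ∈ g i) ∧
      Function.Injective f ∧ Function.Injective g ∧
      (∀ i j, f i ≠ g j) ∧ (∀ i, e₀ ≠ f i ∧ e₀ ≠ g i)

/-- For `v ∈ N_u`, `S_v` is the set of vertices outside `N_u ∪ {u}` lying in some
edge `f` with `|f ∩ N_u| = 1` and `v ∈ f`. -/
def sSet {V : Type*} [Fintype V] [DecidableEq V] (E : Finset (Finset V)) (u v : V) :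
    Finset V :=
  Finset.univ.filter (fun w => w ∉ hNbhd E u ∧ w ≠ u ∧
    ∃ f ∈ E, (f ∩ hNbhd E u).card = 1 ∧ v ∈ f ∧ w ∈ f)

/-!
Let `v ≠ w` be vertices of `e - u`. A common vertex `x` of `S_v` and `S_w` lies in an edge through
`v` and in an edge through `w`, each meeting `N_u` only once, so the first avoids `w` and the
second avoids `v`. An edge through `v` contains at most `k - 1` such `x`, and likewise for `w`,
so each chosen `x` rules out at most `2k - 3` candidates: if `|S_v ∩ S_w| > (2k-3)(s-1)`, a greedy
choice yields `s` pages with pairwise distinct edges of a Berge book whose spine is `e`. The bound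
on the union is then the second Bonferroni inequality over the `k - 1` sets `S_{i_j}`.
-/

open Finset

theorem sum_card_le_card_biUnion_add {ι α : Type*} [DecidableEq ι] [DecidableEq α]
    (S : ι → Finset α) {M : ℕ} (T : Finset ι)
    (hS : ∀ v ∈ T, ∀ w ∈ T, v ≠ w → #(S v ∩ S w) ≤ M) :
    ∑ v ∈ T, #(S v) ≤ #(T.biUnion S) + (#T).choose 2 * M := by
  induction T using Finset.induction_on with
  | empty => simp
  | @insert a T ha ih =>
    have hT := ih fun v hv w hw => hS v (mem_insert_of_mem hv) w (mem_insert_of_mem hw)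
    have hinter : #(S a ∩ T.biUnion S) ≤ #T * M := by
      rw [inter_biUnion]
      refine card_biUnion_le.trans <|
        (sum_le_card_nsmul _ _ _ fun w hw => ?_).trans_eq (smul_eq_mul ..)
      exact hS a (mem_insert_self a T) w (mem_insert_of_mem hw) (ne_of_mem_of_not_mem hw ha).symm
    have := card_union_add_card_inter (S a) (T.biUnion S)
    have hchoose : (#T + 1).choose 2 = (#T).choose 2 + #T := by
      rw [Nat.choose_succ_succ', Nat.choose_one_right, add_comm]
    rw [sum_insert ha, biUnion_insert, card_insert_of_notMem ha, hchoose, add_mul]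
    omega

section
variable {V : Type*} [DecidableEq V]

theorem exists_injective_pair_of_card_fiber_le {α β : Type*} [DecidableEq α] [DecidableEq β]
    (F : V → α) (G : V → β) {m : ℕ} :
    ∀ (n : ℕ) (T : Finset V), (∀ x ∈ T, #{y ∈ T | F y = F x} ≤ m) →
      (∀ x ∈ T, #{y ∈ T | G y = G x} ≤ m) → (2 * m - 1) * n < #T + (2 * m - 1) →
      ∃ c : Fin n → V, (∀ i, c i ∈ T) ∧ (F ∘ c).Injective ∧ (G ∘ c).Injective
  | 0, _, _, _, _ => ⟨Fin.elim0, fun i => i.elim0, fun i => i.elim0, fun i => i.elim0⟩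
  | n + 1, T, hF, hG, hT => by
    have hT : (2 * m - 1) * n < #T := by rw [Nat.mul_succ] at hT; omega
    obtain ⟨x, hx⟩ : T.Nonempty := card_pos.mp (by omega)
    set A := {y ∈ T | F y = F x}
    set B := {y ∈ T | G y = G x}
    have hAB : #(A ∪ B) ≤ 2 * m - 1 := by
      have hx_inter : 0 < #(A ∩ B) := card_pos.mpr ⟨x, by simp [A, B, hx]⟩
      have := card_union_add_card_inter A B
      have hA : #A ≤ m := hF x hx
      have hB : #B ≤ m := hG x hx
      omega
    have hsub : T \ (A ∪ B) ⊆ T := sdiff_subset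
    have hcard : #(T \ (A ∪ B)) = #T - #(A ∪ B) :=
      card_sdiff_of_subset (union_subset (filter_subset _ _) (filter_subset _ _))
    obtain ⟨c, hcT, hcF, hcG⟩ := exists_injective_pair_of_card_fiber_le F G n (T \ (A ∪ B))
      (fun y hy => (card_le_card (filter_subset_filter _ hsub)).trans (hF y (hsub hy)))
      (fun y hy => (card_le_card (filter_subset_filter _ hsub)).trans (hG y (hsub hy)))
      (by omega)
    have hc : ∀ i, c i ∈ T ∧ F (c i) ≠ F x ∧ G (c i) ≠ G x := fun i => by
      obtain ⟨hciT, hci⟩ := mem_sdiff.mp (hcT i)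
      exact ⟨hciT, fun h => hci (mem_union_left _ (mem_filter.mpr ⟨hciT, h⟩)),
        fun h => hci (mem_union_right _ (mem_filter.mpr ⟨hciT, h⟩))⟩
    refine ⟨Fin.cons x c, Fin.cases hx fun i => (hc i).1, ?_, ?_⟩
    · rw [Fin.comp_cons, Fin.cons_injective_iff]
      exact ⟨fun ⟨i, hi⟩ => (hc i).2.1 hi, hcF⟩
    · rw [Fin.comp_cons, Fin.cons_injective_iff]
      exact ⟨fun ⟨i, hi⟩ => (hc i).2.2 hi, hcG⟩

theorem card_fiber_le_sub_one {k : ℕ} {a : V} {T : Finset V} (haT : a ∉ T)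
    (F : V → Finset V)
    (hF : ∀ x ∈ T, #(F x) ≤ k ∧ a ∈ F x ∧ x ∈ F x) :
    ∀ x ∈ T, #{y ∈ T | F y = F x} ≤ k - 1 := by
  intro x hx
  have hsub : {y ∈ T | F y = F x} ⊆ (F x).erase a := fun y hy => by
    obtain ⟨hyT, hy⟩ := mem_filter.mp hy
    exact mem_erase.mpr ⟨ne_of_mem_of_not_mem hyT haT, hy ▸ (hF y hyT).2.2⟩
  calc #{y ∈ T | F y = F x} ≤ #((F x).erase a) := card_le_card hsub
    _ = #(F x) - 1 := card_erase_of_mem (hF x hx).2.1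
    _ ≤ k - 1 := Nat.sub_le_sub_right (hF x hx).1 1

theorem BergeBookFree.card_le {E : Finset (Finset V)} {s k : ℕ} (hfree : BergeBookFree E s)
    (hE : ∀ f ∈ E, #f ≤ k) {a b : V} (hab : a ≠ b) {e₀ : Finset V} (he₀ : e₀ ∈ E)
    (ha : a ∈ e₀) (hb : b ∈ e₀) {T : Finset V} (haT : a ∉ T) (hbT : b ∉ T)
    (hF : ∀ x ∈ T, ∃ f ∈ E, a ∈ f ∧ x ∈ f ∧ b ∉ f)
    (hG : ∀ x ∈ T, ∃ g ∈ E, b ∈ g ∧ x ∈ g ∧ a ∉ g) :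
    #T ≤ (2 * k - 3) * (s - 1) := by
  choose! F hFE haF hxF hbF using hF
  choose! G hGE hbG hxG haG using hG
  by_contra! hT
  have hfib_F :=
    card_fiber_le_sub_one haT F fun x hx => ⟨hE _ (hFE x hx), haF x hx, hxF x hx⟩
  have hfib_G :=
    card_fiber_le_sub_one hbT G fun x hx => ⟨hE _ (hGE x hx), hbG x hx, hxG x hx⟩
  have hs : (2 * (k - 1) - 1) * s < #T + (2 * (k - 1) - 1) := by
    rw [show 2 * (k - 1) - 1 = 2 * k - 3 by omega]
    cases s with
    | zero => omega
    | succ s => rw [Nat.add_sub_cancel] at hT; rw [Nat.mul_succ]; omega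
  obtain ⟨c, hcT, hcF, hcG⟩ := exists_injective_pair_of_card_fiber_le F G s T hfib_F hfib_G hs
  refine hfree ⟨a, b, c, e₀, F ∘ c, G ∘ c, hab, hcF.of_comp,
    fun i => ⟨ne_of_mem_of_not_mem (hcT i) haT, ne_of_mem_of_not_mem (hcT i) hbT⟩,
    he₀, ha, hb,
    fun i => ⟨hFE _ (hcT i), haF _ (hcT i), hxF _ (hcT i)⟩,
    fun i => ⟨hGE _ (hcT i), hbG _ (hcT i), hxG _ (hcT i)⟩, hcF, hcG,
    fun i j (h : F (c i) = G (c j)) => hbF _ (hcT i) (h ▸ hbG _ (hcT j)),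
    fun i => ⟨fun (h : e₀ = F (c i)) => hbF _ (hcT i) (h ▸ hb),
      fun (h : e₀ = G (c i)) => haG _ (hcT i) (h ▸ ha)⟩⟩

end

section
variable {V : Type*} [Fintype V] [DecidableEq V] {E : Finset (Finset V)} {u : V}

theorem mem_hNbhd_of_mem_erase {e : Finset V} {v : V} (he : e ∈ E) (hue : u ∈ e)
    (hv : v ∈ e.erase u) : v ∈ hNbhd E u := by
  obtain ⟨hvu, hve⟩ := mem_erase.mp hv
  exact mem_filter.mpr ⟨mem_univ v, hvu, e, he, hue, hve⟩

theorem notMem_sSet_of_mem_hNbhd {v w : V} (hv : v ∈ hNbhd E u) : v ∉ sSet E u w :=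
  fun h => (mem_filter.mp h).2.1 hv

theorem exists_edge_of_mem_sSet {v w x : V} (hv : v ∈ hNbhd E u) (hw : w ∈ hNbhd E u)
    (hvw : v ≠ w) (hx : x ∈ sSet E u v) : ∃ f ∈ E, v ∈ f ∧ x ∈ f ∧ w ∉ f := by
  obtain ⟨f, hf, hfN, hvf, hxf⟩ := (mem_filter.mp hx).2.2.2
  refine ⟨f, hf, hvf, hxf, fun hwf => hvw ?_⟩
  exact card_le_one.mp hfN.le v (mem_inter.mpr ⟨hvf, hv⟩) w (mem_inter.mpr ⟨hwf, hw⟩)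

theorem card_sSet_inter_sSet_le {k s : ℕ} (hE : ∀ f ∈ E, #f ≤ k) (hfree : BergeBookFree E s)
    {e : Finset V} (he : e ∈ E) (hue : u ∈ e) {v w : V} (hv : v ∈ e.erase u)
    (hw : w ∈ e.erase u) (hvw : v ≠ w) :
    #(sSet E u v ∩ sSet E u w) ≤ (2 * k - 3) * (s - 1) := by
  have hvN := mem_hNbhd_of_mem_erase he hue hv
  have hwN := mem_hNbhd_of_mem_erase he hue hw
  exact hfree.card_le hE hvw he (mem_erase.mp hv).2 (mem_erase.mp hw).2
    (fun h => notMem_sSet_of_mem_hNbhd hvN (mem_inter.mp h).1)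
    (fun h => notMem_sSet_of_mem_hNbhd hwN (mem_inter.mp h).1)
    (fun x hx => exists_edge_of_mem_sSet hvN hwN hvw (mem_inter.mp hx).1)
    (fun x hx => exists_edge_of_mem_sSet hwN hvN hvw.symm (mem_inter.mp hx).2)

end

theorem union_sSet_bound_general {V : Type*} [Fintype V] [DecidableEq V]
    (E : Finset (Finset V)) (k s : ℕ) (hk : 3 ≤ k) (hs : 2 ≤ s)
    (hunif : ∀ e ∈ E, e.card = k)
    (hfree : BergeBookFree E s)
    (u : V) (e : Finset V) (he : e ∈ E) (hue : u ∈ e) :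
    (∑ v ∈ e.erase u, ((sSet E u v).card : ℝ))
        - ((k - 1).choose 2 : ℝ) * ((2 * (k : ℝ) - 3) * ((s : ℝ) - 1))
      ≤ (((e.erase u).biUnion (fun v => sSet E u v)).card : ℝ) := by
  have hcard : #(e.erase u) = k - 1 := by rw [card_erase_of_mem hue, hunif e he]
  have key := sum_card_le_card_biUnion_add (sSet E u) (e.erase u) fun v hv w hw hvw =>
    card_sSet_inter_sSet_le (fun f hf => (hunif f hf).le) hfree he hue hv hw hvw
  rw [hcard] at key
  have hk' : ((2 * k - 3 : ℕ) : ℝ) = 2 * k - 3 := by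
    rw [Nat.cast_sub (by omega)]; push_cast; ring
  have hs' : ((s - 1 : ℕ) : ℝ) = s - 1 := by rw [Nat.cast_sub (by omega)]; simp
  have hreal := (Nat.cast_le (α := ℝ)).mpr key
  push_cast [hk', hs'] at hreal
  linarith

/-- In a linear `k`-uniform Berge-`B_s`-free hypergraph, for an edge
`e = {u, i_2, …, i_k}` through `u`,
`|∪_{j=2}^{k} S_{i_j}| ≥ Σ_{j=2}^{k} |S_{i_j}| − C(k-1,2)·(2k-3)(s-1)`. -/
theorem union_sSet_bound {V : Type*} [Fintype V] [DecidableEq V]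
    (E : Finset (Finset V)) (k s : ℕ) (hk : 3 ≤ k) (hs : 2 ≤ s)
    (hunif : ∀ e ∈ E, e.card = k)
    (hlin : ∀ e ∈ E, ∀ f ∈ E, e ≠ f → (e ∩ f).card ≤ 1)
    (hfree : BergeBookFree E s)
    (u : V) (e : Finset V) (he : e ∈ E) (hue : u ∈ e) :
    (∑ v ∈ e.erase u, ((sSet E u v).card : ℝ))
        - ((k - 1).choose 2 : ℝ) * ((2 * (k : ℝ) - 3) * ((s : ℝ) - 1))
      ≤ (((e.erase u).biUnion (fun v => sSet E u v)).card : ℝ) :=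
  union_sSet_bound_general E k s hk hs hunif hfree u e he hue
end

section
/- Let H be a connected linear k-uniform hypergraph on n vertices (n, k ≥ 3) with no Berge-B_s and no Berge-K_{2,t}, where s ≥ 2 and 1 ≤ t ≤ (6k²-15k+10)(s-1)/2 + 1. Then the spectral radius of the adjacency tensor of H satisfies ρ(H) ≤ √( (6k²-15k+10)(s-1)(n-1) / (2(k-1)²) ). -/
attribute [local instance] Classical.propDecidable

/-- `lam` is an eigenvalue of the order-`k`, dimension-`n` tensor `A`:
there is a nonzero `x` with `Σ a_{i i_2 … i_k} x_{i_2} ⋯ x_{i_k} = lam·x_i^{k-1}`. -/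
def IsTensorEigenvalue (n k : ℕ) (A : Fin n → (Fin (k - 1) → Fin n) → ℂ)
    (lam : ℂ) : Prop :=
  ∃ x : Fin n → ℂ, x ≠ 0 ∧
    ∀ i, (∑ p : Fin (k - 1) → Fin n, A i p * ∏ m, x (p m)) = lam * x i ^ (k - 1)

/-- The spectral radius of a tensor: the largest modulus of its eigenvalues. -/
noncomputable def specRad (n k : ℕ) (A : Fin n → (Fin (k - 1) → Fin n) → ℂ) : ℝ :=
  sSup {r : ℝ | ∃ lam : ℂ, IsTensorEigenvalue n k A lam ∧ ‖lam‖ = r}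

/-- The adjacency tensor of a `k`-uniform hypergraph: entry `1/(k-1)!` whenever the
index tuple forms an edge, and `0` otherwise. -/
noncomputable def adjT (n k : ℕ) (E : Finset (Finset (Fin n))) :
    Fin n → (Fin (k - 1) → Fin n) → ℂ := fun i p =>
  if insert i (Finset.image p Finset.univ) ∈ E then
    (1 : ℂ) / (Nat.factorial (k - 1)) else 0

/-- `H` contains no Berge-`K_{2,t}`: there do not exist distinct vertices
`a, b, c_1, …, c_t` and `2t` distinct hyperedges `f i ⊇ {a, c i}`,
`g i ⊇ {b, c i}`. -/
def BergeK2tFree {V : Type*} (E : Finset (Finset V)) (t : ℕ) : Prop :=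
  ¬ ∃ (a b : V) (c : Fin t → V) (f g : Fin t → Finset V),
      a ≠ b ∧ Function.Injective c ∧ (∀ i, c i ≠ a ∧ c i ≠ b) ∧
      (∀ i, f i ∈ E ∧ a ∈ f i ∧ c i ∈ f i) ∧
      (∀ i, g i ∈ E ∧ b ∈ g i ∧ c i ∈ g i) ∧
      Function.Injective f ∧ Function.Injective g ∧
      (∀ i j, f i ≠ g j)

/-!
Scale the moduli of an eigenvector to `y` with largest entry `y u = 1`. The eigenequation at `u`,
AM-GM on every edge through `u` and the eigenequation at every neighbour `j` of `u` give
`(k - 1) ρ² ≤ ∑_{j ∈ N(u)} d(j)`. By linearity, `(k - 1) ∑_{j ∈ N(u)} d(j)` is `(k - 1) |N(u)|`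
plus the number of paths `u — j — w` whose second edge avoids `u`.

Fix `w`. A largest set of middle vertices `j` with distinct edges `uj` and distinct edges `jw`
spans a Berge-`B_s` with spine `uw` when `w ∈ N(u)`, and a Berge-`K_{2,t}` otherwise, so it has
fewer than `s`, resp. `t`, elements. Every other middle vertex shares its edge to `u` or to `w`
with a member of this set, and is paid for by the ordered pairs of middle vertices sharing such an
edge. Summed over `w`, a pair `p, q` sharing its edge to `u` is counted at most `(2k - 3)(s - 1)`
times, as the vertices `w` are pages of a book with spine `upq`, and a pair sharing its edge to
`w` at most `k - 2` times, as `w` lies on the edge through `p, q`. Bounding the numbers of such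
pairs in the same way and adding up gives `2 (k - 1)² ρ² ≤ (6k² - 15k + 10) (s - 1) (n - 1)`.
-/

open Finset
namespace Finset

variable {α β γ : Type*}

theorem card_le_mul_of_forall_snd_mem {X : Finset (α × β)} {A : Finset α} {T : α → Finset β}
    {m : ℕ} (hX : ∀ x ∈ X, x.1 ∈ A ∧ x.2 ∈ T x.1) (hT : ∀ a ∈ A, #(T a) ≤ m) :
    #X ≤ m * #A := by
  calc #X ≤ #(A.sigma T) := card_le_card_of_injOn (fun x => ⟨x.1, x.2⟩)
        (fun x hx => by simpa using hX x hx) (fun x _ y _ h => by simp_all [Prod.ext_iff])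
    _ ≤ m * #A := by rw [card_sigma, mul_comm]; exact sum_le_card_nsmul _ _ _ hT

theorem exists_injective_fin_mem {W : Finset α} {s : ℕ} (h : s ≤ #W) :
    ∃ c : Fin s → α, Function.Injective c ∧ ∀ i, c i ∈ W := by
  obtain ⟨ι⟩ : Nonempty (Fin s ↪ W) := Function.Embedding.nonempty_of_card_le (by simpa using h)
  exact ⟨fun i => ι i, Subtype.val_injective.comp ι.injective, fun i => (ι i).2⟩

variable [DecidableEq α] [DecidableEq β] [DecidableEq γ]

theorem exists_rainbow_subset (P : Finset α) (f : α → β) (g : α → γ) :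
    ∃ S ⊆ P, Set.InjOn f S ∧ Set.InjOn g S ∧ ∀ p ∈ P, ∃ j ∈ S, f p = f j ∨ g p = g j := by
  let R := P.powerset.filter fun S : Finset α => Set.InjOn f S ∧ Set.InjOn g S
  obtain ⟨S, hSR, hmax⟩ := R.exists_max_image card ⟨∅, by simp [R]⟩
  simp only [R, mem_filter, mem_powerset] at hSR hmax
  refine ⟨S, hSR.1, hSR.2.1, hSR.2.2, fun p hp => ?_⟩
  by_contra! hfree
  have hpS : p ∉ S := fun h => (hfree p h).1 rfl
  have hins := hmax (insert p S) ⟨insert_subset hp hSR.1, ?_, ?_⟩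
  · rw [card_insert_of_notMem hpS] at hins
    omega
  all_goals
    rw [coe_insert, Set.injOn_insert (mem_coe.not.mpr hpS)]
    refine ⟨by tauto, fun ⟨j, hj, h⟩ => ?_⟩
    have := hfree j hj
    tauto

theorem two_mul_card_filter_exists_eq_le (P S : Finset α) (hSP : S ⊆ P) (f : α → β) :
    2 * #((P \ S).filter fun p => ∃ j ∈ S, f p = f j) ≤
      #(P.offDiag.filter fun pq => f pq.1 = f pq.2) := by
  let X := ((P \ S) ×ˢ S).filter fun pq => f pq.1 = f pq.2
  have hfst : (P \ S).filter (fun p => ∃ j ∈ S, f p = f j) ⊆ X.image Prod.fst := by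
    intro p hp
    simp only [mem_filter] at hp
    obtain ⟨j, hj, hpj⟩ := hp.2
    exact mem_image.mpr ⟨(p, j), by simp [X, hp.1, hj, hpj], rfl⟩
  have hdisj : Disjoint X (X.image Prod.swap) := by
    rw [disjoint_left]
    rintro ⟨p, q⟩ hX hX'
    obtain ⟨⟨q', p'⟩, hq, hswap⟩ := mem_image.mp hX'
    simp only [Prod.swap_prod_mk, Prod.mk.injEq] at hswap
    obtain ⟨rfl, rfl⟩ := hswap
    simp only [X, mem_filter, mem_product, mem_sdiff] at hX hq
    exact hX.1.1.2 hq.1.2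
  have hsub : X ∪ X.image Prod.swap ⊆ P.offDiag.filter fun pq => f pq.1 = f pq.2 := by
    refine union_subset (fun ⟨p, q⟩ h => ?_) (fun _ h => ?_)
    · simp only [X, mem_filter, mem_product, mem_sdiff] at h
      simp only [mem_filter, mem_offDiag]
      exact ⟨⟨h.1.1.1, hSP h.1.2, fun hpq => h.1.1.2 (hpq ▸ h.1.2)⟩, h.2⟩
    · obtain ⟨⟨p, q⟩, hX, rfl⟩ := mem_image.mp h
      simp only [X, mem_filter, mem_product, mem_sdiff] at hX
      simp only [mem_filter, mem_offDiag, Prod.fst_swap, Prod.snd_swap]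
      exact ⟨⟨hSP hX.1.2, hX.1.1.1, fun hpq => hX.1.1.2 (hpq ▸ hX.1.2)⟩, hX.2.symm⟩
  calc 2 * #((P \ S).filter fun p => ∃ j ∈ S, f p = f j)
      ≤ 2 * #X := by gcongr; exact (card_le_card hfst).trans card_image_le
    _ = #(X ∪ X.image Prod.swap) := by
      rw [card_union_of_disjoint hdisj, card_image_of_injective _ Prod.swap_injective]; ring
    _ ≤ _ := card_le_card hsub

theorem two_mul_card_le_of_forall_exists_eq (P S : Finset α) (hSP : S ⊆ P) (f : α → β)
    (g : α → γ) (hcov : ∀ p ∈ P, ∃ j ∈ S, f p = f j ∨ g p = g j) :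
    2 * #P ≤ 2 * #S + #(P.offDiag.filter fun pq => f pq.1 = f pq.2) +
      #(P.offDiag.filter fun pq => g pq.1 = g pq.2) := by
  have hcover : P ⊆ S ∪ ((P \ S).filter fun p => ∃ j ∈ S, f p = f j) ∪
      ((P \ S).filter fun p => ∃ j ∈ S, g p = g j) := by
    intro p hp
    by_cases hpS : p ∈ S
    · simp [hpS]
    · obtain ⟨j, hj, h⟩ := hcov p hp
      simp only [mem_union, mem_filter, mem_sdiff]
      rcases h with h | h
      · exact Or.inl (Or.inr ⟨⟨hp, hpS⟩, j, hj, h⟩)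
      · exact Or.inr ⟨⟨hp, hpS⟩, j, hj, h⟩
  have := card_le_card hcover
  have := card_union_le (S ∪ ((P \ S).filter fun p => ∃ j ∈ S, f p = f j))
    ((P \ S).filter fun p => ∃ j ∈ S, g p = g j)
  have := card_union_le S ((P \ S).filter fun p => ∃ j ∈ S, f p = f j)
  have := two_mul_card_filter_exists_eq_le P S hSP f
  have := two_mul_card_filter_exists_eq_le P S hSP g
  omega

theorem card_le_mul_of_forall_exists_eq (P S : Finset α) (hSP : S ⊆ P) (f : α → β)
    (g : α → γ) (hcov : ∀ p ∈ P, ∃ j ∈ S, f p = f j ∨ g p = g j) (m : ℕ)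
    (hf : ∀ j ∈ S, #(P.filter fun p => f p = f j) ≤ m)
    (hg : ∀ j ∈ S, #(P.filter fun p => g p = g j) ≤ m) :
    #P ≤ (2 * m - 1) * #S := by
  calc #P ≤ #(S.biUnion fun j => P.filter (fun p => f p = f j) ∪ P.filter (fun p => g p = g j)) :=
        card_le_card fun p hp => by
          obtain ⟨j, hj, h⟩ := hcov p hp
          simpa [hp] using ⟨j, hj, h⟩
    _ ≤ ∑ j ∈ S, #(P.filter (fun p => f p = f j) ∪ P.filter (fun p => g p = g j)) :=
        card_biUnion_le
    _ ≤ ∑ _j ∈ S, (2 * m - 1) := sum_le_sum fun j hj => by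
        have hj' : j ∈ P.filter (fun p => f p = f j) ∩ P.filter (fun p => g p = g j) := by
          simp [hSP hj]
        have := card_pos.mpr ⟨j, hj'⟩
        have := card_union_add_card_inter (P.filter fun p => f p = f j)
          (P.filter fun p => g p = g j)
        have := hf j hj
        have := hg j hj
        omega
    _ = (2 * m - 1) * #S := by rw [sum_const, smul_eq_mul, mul_comm]

end Finset

theorem Real.card_mul_prod_le_sum_pow {ι : Type*} (S : Finset ι) {y : ι → ℝ}
    (hy : ∀ j, 0 ≤ y j) : #S * ∏ j ∈ S, y j ≤ ∑ j ∈ S, y j ^ #S := by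
  rcases S.eq_empty_or_nonempty with rfl | hS
  · simp
  have hc : (0 : ℝ) < #S := by exact_mod_cast hS.card_pos
  have hamgm := Real.geom_mean_le_arith_mean_weighted S (fun _ => (#S : ℝ)⁻¹)
    (fun j => y j ^ #S) (fun _ _ => by positivity)
    (by rw [sum_const, nsmul_eq_mul, mul_inv_cancel₀ hc.ne']) (fun j _ => pow_nonneg (hy j) _)
  have hroot (j : ι) : (y j ^ #S) ^ (#S : ℝ)⁻¹ = y j := by
    rw [← Real.rpow_natCast, ← Real.rpow_mul (hy j), mul_inv_cancel₀ hc.ne', Real.rpow_one]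
  simp only [hroot, ← mul_sum] at hamgm
  calc #S * ∏ j ∈ S, y j ≤ #S * ((#S : ℝ)⁻¹ * ∑ j ∈ S, y j ^ #S) := by gcongr
    _ = ∑ j ∈ S, y j ^ #S := by field_simp

namespace Hypergraph

variable {V : Type*} {E : Finset (Finset V)} {k : ℕ}

def IsUniform (E : Finset (Finset V)) (k : ℕ) : Prop := ∀ e ∈ E, #e = k

theorem IsUniform.subset {E' : Finset (Finset V)} (hunif : IsUniform E k) (h : E' ⊆ E) :
    IsUniform E' k :=
  fun e he => hunif e (h he)

variable [DecidableEq V]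

def IsLinear (E : Finset (Finset V)) : Prop := ∀ e ∈ E, ∀ f ∈ E, e ≠ f → #(e ∩ f) ≤ 1

def degree (E : Finset (Finset V)) (v : V) : ℕ := #(E.filter (v ∈ ·))

def nbhd (E : Finset (Finset V)) (v : V) : Finset V := (E.filter (v ∈ ·)).biUnion (·.erase v)

noncomputable def edgeThrough (E : Finset (Finset V)) (a b : V) : Finset V :=
  if h : ∃ e ∈ E, a ∈ e ∧ b ∈ e then h.choose else ∅

theorem mem_nbhd {v w : V} : w ∈ nbhd E v ↔ w ≠ v ∧ ∃ e ∈ E, v ∈ e ∧ w ∈ e := by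
  simp only [nbhd, mem_biUnion, mem_filter, mem_erase]
  constructor
  · rintro ⟨e, ⟨he, hv⟩, hw, hwe⟩
    exact ⟨hw, e, he, hv, hwe⟩
  · rintro ⟨hw, e, he, hv, hwe⟩
    exact ⟨e, ⟨he, hv⟩, hw, hwe⟩

theorem edgeThrough_spec {a b : V} (h : ∃ e ∈ E, a ∈ e ∧ b ∈ e) :
    edgeThrough E a b ∈ E ∧ a ∈ edgeThrough E a b ∧ b ∈ edgeThrough E a b := by
  rw [edgeThrough, dif_pos h]
  exact h.choose_spec

namespace IsLinear

theorem subset {E' : Finset (Finset V)} (hlin : IsLinear E) (h : E' ⊆ E) : IsLinear E' :=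
  fun e he f hf => hlin e (h he) f (h hf)

theorem eq_of_mem (hlin : IsLinear E) {a b : V} (hab : a ≠ b) {e f : Finset V} (he : e ∈ E)
    (hf : f ∈ E) (hae : a ∈ e) (hbe : b ∈ e) (haf : a ∈ f) (hbf : b ∈ f) : e = f := by
  by_contra hne
  have := card_le_card (show {a, b} ⊆ e ∩ f by simp [insert_subset_iff, *])
  have := hlin e he f hf hne
  rw [card_pair hab] at *
  omega

theorem edgeThrough_eq (hlin : IsLinear E) {a b : V} (hab : a ≠ b) {e : Finset V} (he : e ∈ E)
    (ha : a ∈ e) (hb : b ∈ e) : edgeThrough E a b = e := by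
  obtain ⟨h, ha', hb'⟩ := edgeThrough_spec ⟨e, he, ha, hb⟩
  exact hlin.eq_of_mem hab h he ha' hb' ha hb

theorem pairwiseDisjoint_erase (hlin : IsLinear E) (v : V) :
    (E.filter (v ∈ ·) : Set (Finset V)).PairwiseDisjoint (·.erase v) := by
  intro e he f hf hne
  simp only [coe_filter, Set.mem_ofPred_eq] at he hf
  refine disjoint_left.mpr fun w hwe hwf => hne ?_
  rw [mem_erase] at hwe hwf
  exact hlin.eq_of_mem hwe.1.symm he.1 hf.1 he.2 hwe.2 hf.2 hwf.2

theorem card_nbhd (hlin : IsLinear E) (hunif : IsUniform E k) (v : V) :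
    #(nbhd E v) = (k - 1) * degree E v := by
  rw [nbhd, card_biUnion (hlin.pairwiseDisjoint_erase v), degree, mul_comm]
  refine sum_const_nat fun e he => ?_
  rw [mem_filter] at he
  rw [card_erase_of_mem he.2, hunif e he.1]

theorem degree_le_degree_filter_notMem_add_one (hlin : IsLinear E) {u j : V} (hju : j ≠ u) :
    degree E j ≤ degree (E.filter (u ∉ ·)) j + 1 := by
  have hsplit := card_filter_add_card_filter_not (s := E.filter (j ∈ ·)) (u ∈ ·)
  have hu : #((E.filter (j ∈ ·)).filter (u ∈ ·)) ≤ 1 := card_le_one.mpr fun e he f hf => by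
    simp only [mem_filter] at he hf
    exact hlin.eq_of_mem hju he.1.1 hf.1.1 he.1.2 he.2 hf.1.2 hf.2
  rw [degree, degree, filter_comm]
  omega

end IsLinear

theorem card_filter_edgeThrough_eq_le (hunif : IsUniform E k) {c j : V}
    (hj : ∃ e ∈ E, c ∈ e ∧ j ∈ e) {W : Finset V} (hW : ∀ w ∈ W, w ≠ c ∧ ∃ e ∈ E, c ∈ e ∧ w ∈ e) :
    #(W.filter fun w => edgeThrough E c w = edgeThrough E c j) ≤ k - 1 := by
  obtain ⟨hjE, hc, -⟩ := edgeThrough_spec hj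
  calc #(W.filter fun w => edgeThrough E c w = edgeThrough E c j)
      ≤ #((edgeThrough E c j).erase c) := card_le_card fun w hw => by
        rw [mem_filter] at hw
        exact mem_erase.mpr ⟨(hW w hw.1).1, hw.2 ▸ (edgeThrough_spec (hW w hw.1).2).2.2⟩
    _ = k - 1 := by rw [card_erase_of_mem hc, hunif _ hjE]

theorem card_erase_erase_edgeThrough (hunif : IsUniform E k) {a b : V} (hab : a ≠ b)
    (h : ∃ e ∈ E, a ∈ e ∧ b ∈ e) : #(((edgeThrough E a b).erase a).erase b) = k - 2 := by
  obtain ⟨he, ha, hb⟩ := edgeThrough_spec h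
  rw [card_erase_of_mem (mem_erase.mpr ⟨hab.symm, hb⟩), card_erase_of_mem ha, hunif _ he]
  omega

def IsSubEigenvector (E : Finset (Finset V)) (k : ℕ) (r : ℝ) (y : V → ℝ) : Prop :=
  ∀ i, r * y i ^ (k - 1) ≤ ∑ e ∈ E.filter (i ∈ ·), ∏ j ∈ e.erase i, y j

theorem IsLinear.mul_sq_le_sum_degree (hlin : IsLinear E) (hunif : IsUniform E k) (hk : 1 ≤ k)
    {r : ℝ} (hr : 0 ≤ r) {y : V → ℝ} (hy0 : ∀ i, 0 ≤ y i) (hy1 : ∀ i, y i ≤ 1) {u : V}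
    (hyu : y u = 1) (hsub : IsSubEigenvector E k r y) :
    ((k : ℝ) - 1) * r ^ 2 ≤ ∑ j ∈ nbhd E u, (degree E j : ℝ) := by
  have hdeg (j : V) : ∑ f ∈ E.filter (j ∈ ·), ∏ z ∈ f.erase j, y z ≤ degree E j := by
    simpa [degree] using sum_le_card_nsmul _ _ 1 fun f _ =>
      prod_le_one (fun z _ => hy0 z) fun z _ => hy1 z
  have hedge : ∀ e ∈ E.filter (u ∈ ·),
      ((k : ℝ) - 1) * (r * ∏ j ∈ e.erase u, y j) ≤ ∑ j ∈ e.erase u, (degree E j : ℝ) := by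
    intro e he
    rw [mem_filter] at he
    have hcard : #(e.erase u) = k - 1 := by rw [card_erase_of_mem he.2, hunif e he.1]
    have hamgm := Real.card_mul_prod_le_sum_pow (e.erase u) hy0
    rw [hcard, Nat.cast_sub hk, Nat.cast_one] at hamgm
    calc ((k : ℝ) - 1) * (r * ∏ j ∈ e.erase u, y j)
        = r * (((k : ℝ) - 1) * ∏ j ∈ e.erase u, y j) := by ring
      _ ≤ ∑ j ∈ e.erase u, r * y j ^ (k - 1) := by rw [← mul_sum]; gcongr
      _ ≤ ∑ j ∈ e.erase u, (degree E j : ℝ) := sum_le_sum fun j _ => (hsub j).trans (hdeg j)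
  have hu := hsub u
  rw [hyu, one_pow, mul_one] at hu
  calc ((k : ℝ) - 1) * r ^ 2
      ≤ ((k : ℝ) - 1) * (r * ∑ e ∈ E.filter (u ∈ ·), ∏ j ∈ e.erase u, y j) := by
        rw [sq]
        gcongr
        exact sub_nonneg.mpr (by exact_mod_cast hk)
    _ = ∑ e ∈ E.filter (u ∈ ·), ((k : ℝ) - 1) * (r * ∏ j ∈ e.erase u, y j) := by
        rw [mul_sum, mul_sum]
    _ ≤ ∑ e ∈ E.filter (u ∈ ·), ∑ j ∈ e.erase u, (degree E j : ℝ) := sum_le_sum hedge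
    _ = ∑ j ∈ nbhd E u, (degree E j : ℝ) := (sum_biUnion (hlin.pairwiseDisjoint_erase u)).symm

end Hypergraph

open Hypergraph

theorem injOn_of_image_univ_eq {α : Type*} [DecidableEq α] {c : ℕ} {S : Finset α}
    (hS : #S = c) {p : Fin c → α} (h : univ.image p = S) :
    Set.InjOn p (univ : Finset (Fin c)) :=
  card_image_iff.mp (by rw [h, hS, card_univ, Fintype.card_fin])

theorem card_filter_image_eq_factorial {α : Type*} [Fintype α] [DecidableEq α] {c : ℕ}
    {S : Finset α} (hS : #S = c) :
    #(univ.filter fun p : Fin c → α => univ.image p = S) = c.factorial := by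
  rw [show c.factorial = Fintype.card (Fin c ≃ S) by
    rw [Fintype.card_equiv (S.equivFinOfCardEq hS).symm, Fintype.card_fin]]
  symm
  refine card_bij (fun e _ m => e m) (fun e _ => ?_) (fun e₁ _ e₂ _ h => ?_) (fun p hp => ?_)
  · refine mem_filter.mpr ⟨mem_univ _, subset_antisymm (fun j hj => ?_) fun j hj => ?_⟩
    · obtain ⟨m, -, rfl⟩ := mem_image.mp hj
      exact (e m).2
    · exact mem_image.mpr ⟨e.symm ⟨j, hj⟩, mem_univ _, by simp⟩
  · exact Equiv.ext fun m => Subtype.ext (congrFun h m)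
  · have himage : univ.image p = S := (mem_filter.mp hp).2
    have hmem (m : Fin c) : p m ∈ S := himage ▸ mem_image_of_mem p (mem_univ m)
    refine ⟨Equiv.ofBijective (fun m => ⟨p m, hmem m⟩) ⟨fun m₁ m₂ h =>
      injOn_of_image_univ_eq hS himage (mem_coe.mpr (mem_univ m₁)) (mem_coe.mpr (mem_univ m₂))
        (congrArg Subtype.val h), fun ⟨j, hj⟩ => ?_⟩, mem_univ _, rfl⟩
    obtain ⟨m, -, rfl⟩ := mem_image.mp (himage ▸ hj)
    exact ⟨m, rfl⟩

theorem sum_filter_image_eq_prod {α R : Type*} [Fintype α] [DecidableEq α] [CommSemiring R]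
    {c : ℕ} {S : Finset α} (hS : #S = c) (x : α → R) :
    ∑ p ∈ univ.filter (fun p : Fin c → α => univ.image p = S), ∏ m, x (p m) =
      c.factorial * ∏ j ∈ S, x j := by
  have hterm : ∀ p ∈ univ.filter (fun p : Fin c → α => univ.image p = S),
      ∏ m, x (p m) = ∏ j ∈ S, x j := by
    intro p hp
    have himage : univ.image p = S := (mem_filter.mp hp).2
    rw [← himage, prod_image (injOn_of_image_univ_eq hS himage)]
  rw [sum_congr rfl hterm, sum_const, card_filter_image_eq_factorial hS, nsmul_eq_mul]

theorem adjT_sum_mul_prod {n k : ℕ} (hk : 1 ≤ k) {E : Finset (Finset (Fin n))}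
    (hunif : IsUniform E k) (x : Fin n → ℂ) (i : Fin n) :
    ∑ p : Fin (k - 1) → Fin n, adjT n k E i p * ∏ m, x (p m) =
      ∑ e ∈ E.filter (i ∈ ·), ∏ j ∈ e.erase i, x j := by
  let edge (p : Fin (k - 1) → Fin n) : Finset (Fin n) := insert i (univ.image p)
  -- `p` spans the edge `e ∋ i` exactly when its image is `e \ {i}`, as `#(image p) ≤ k - 1 < #e`
  have hfiber : ∀ e ∈ E.filter (i ∈ ·), univ.filter (fun p => edge p ∈ E ∧ edge p = e) =
      univ.filter (fun p => univ.image p = e.erase i) := by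
    intro e he
    rw [mem_filter] at he
    ext p
    simp only [mem_filter, mem_univ, true_and]
    constructor
    · rintro ⟨-, hpe⟩
      have hi : i ∉ univ.image p := fun hi => by
        have h₁ : #(univ.image p) = k := by
          rw [← insert_eq_of_mem hi]
          exact (congrArg card hpe).trans (hunif e he.1)
        have h₂ := card_image_le (s := univ) (f := p)
        rw [card_univ, Fintype.card_fin] at h₂
        omega
      rw [← hpe, erase_insert hi]
    · intro hp
      have hpe : edge p = e := by simp only [edge, hp, insert_erase he.2]
      exact ⟨hpe ▸ he.1, hpe⟩
  calc ∑ p : Fin (k - 1) → Fin n, adjT n k E i p * ∏ m, x (p m)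
      = ∑ p ∈ univ.filter (edge · ∈ E), (1 / (k - 1).factorial : ℂ) * ∏ m, x (p m) := by
        rw [sum_filter]
        refine sum_congr rfl fun p _ => ?_
        simp only [adjT, edge]
        split_ifs <;> simp
    _ = ∑ e ∈ E.filter (i ∈ ·), ∑ p ∈ univ.filter (fun p => univ.image p = e.erase i),
          (1 / (k - 1).factorial : ℂ) * ∏ m, x (p m) := by
        rw [← sum_fiberwise_of_maps_to (g := edge) (t := E.filter (i ∈ ·))
          (fun p hp => mem_filter.mpr ⟨(mem_filter.mp hp).2, mem_insert_self _ _⟩)]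
        refine sum_congr rfl fun e he => ?_
        rw [filter_filter, hfiber e he]
    _ = ∑ e ∈ E.filter (i ∈ ·), ∏ j ∈ e.erase i, x j := by
        refine sum_congr rfl fun e he => ?_
        rw [mem_filter] at he
        rw [← mul_sum, sum_filter_image_eq_prod (by rw [card_erase_of_mem he.2, hunif e he.1]),
          one_div, inv_mul_cancel_left₀ (by exact_mod_cast (k - 1).factorial_ne_zero)]

theorem IsTensorEigenvalue.exists_subEigenvector {n k : ℕ} (hk : 1 ≤ k)
    {E : Finset (Finset (Fin n))} (hunif : IsUniform E k) {lam : ℂ}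
    (hlam : IsTensorEigenvalue n k (adjT n k E) lam) :
    ∃ (y : Fin n → ℝ) (u : Fin n), (∀ i, 0 ≤ y i) ∧ (∀ i, y i ≤ 1) ∧ y u = 1 ∧
      IsSubEigenvector E k ‖lam‖ y := by
  obtain ⟨x, hx0, hx⟩ := hlam
  obtain ⟨i₀, hi₀⟩ := Function.ne_iff.mp hx0
  have : Nonempty (Fin n) := ⟨i₀⟩
  obtain ⟨u, hu⟩ := Finite.exists_max fun i => ‖x i‖
  have hxu : 0 < ‖x u‖ := (norm_pos_iff.mpr hi₀).trans_le (hu i₀)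
  refine ⟨fun i => ‖x i‖ / ‖x u‖, u, fun i => by positivity,
    fun i => div_le_one_of_le₀ (hu i) hxu.le, div_self hxu.ne', fun i => ?_⟩
  have hnorm : ‖lam‖ * ‖x i‖ ^ (k - 1) ≤ ∑ e ∈ E.filter (i ∈ ·), ∏ j ∈ e.erase i, ‖x j‖ := by
    calc ‖lam‖ * ‖x i‖ ^ (k - 1) = ‖∑ e ∈ E.filter (i ∈ ·), ∏ j ∈ e.erase i, x j‖ := by
          rw [← adjT_sum_mul_prod hk hunif, hx i, norm_mul, norm_pow]
      _ ≤ ∑ e ∈ E.filter (i ∈ ·), ∏ j ∈ e.erase i, ‖x j‖ := by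
          simpa only [norm_prod] using
            norm_sum_le (E.filter (i ∈ ·)) fun e => ∏ j ∈ e.erase i, x j
  have hscale : ∑ e ∈ E.filter (i ∈ ·), ∏ j ∈ e.erase i, ‖x j‖ / ‖x u‖ =
      (∑ e ∈ E.filter (i ∈ ·), ∏ j ∈ e.erase i, ‖x j‖) / ‖x u‖ ^ (k - 1) := by
    rw [sum_div]
    refine sum_congr rfl fun e he => ?_
    rw [mem_filter] at he
    rw [prod_div_distrib, prod_const, card_erase_of_mem he.2, hunif e he.1]
  rw [hscale, div_pow, ← mul_div_assoc]
  exact div_le_div_of_nonneg_right hnorm (by positivity)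

section Berge

variable {V : Type*} [DecidableEq V] {E : Finset (Finset V)} {k s t : ℕ}

theorem BergeBookFree.card_lt (hB : BergeBookFree E s) (hlin : IsLinear E) {a b : V}
    (hab : a ≠ b) {e₀ : Finset V} (he₀ : e₀ ∈ E) (ha : a ∈ e₀) (hb : b ∈ e₀) {W : Finset V}
    (hW : ∀ w ∈ W, w ∉ e₀ ∧ (∃ e ∈ E, a ∈ e ∧ w ∈ e) ∧ ∃ e ∈ E, b ∈ e ∧ w ∈ e)
    (hinja : Set.InjOn (edgeThrough E a) W) (hinjb : Set.InjOn (edgeThrough E b) W) :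
    #W < s := by
  by_contra! hsW
  obtain ⟨c, hc, hcW⟩ := exists_injective_fin_mem hsW
  have hout (i : Fin s) : c i ∉ e₀ := (hW _ (hcW i)).1
  have hF (i : Fin s) := edgeThrough_spec (hW _ (hcW i)).2.1
  have hG (i : Fin s) := edgeThrough_spec (hW _ (hcW i)).2.2
  -- an edge through `a` and `b` is `e₀`, which misses every `c i`
  have hFG (i j : Fin s) : edgeThrough E a (c i) ≠ edgeThrough E b (c j) := fun h =>
    hout i (hlin.eq_of_mem hab (hF i).1 he₀ (hF i).2.1 (h ▸ (hG j).2.1) ha hb ▸ (hF i).2.2)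
  exact hB ⟨a, b, c, e₀, fun i => edgeThrough E a (c i), fun i => edgeThrough E b (c i), hab, hc,
    fun i => ⟨fun h => hout i (h ▸ ha), fun h => hout i (h ▸ hb)⟩, he₀, ha, hb, hF, hG,
    fun i j h => hc (hinja (hcW i) (hcW j) h), fun i j h => hc (hinjb (hcW i) (hcW j) h), hFG,
    fun i => ⟨fun h => hout i (h ▸ (hF i).2.2), fun h => hout i (h ▸ (hG i).2.2)⟩⟩

theorem BergeK2tFree.card_lt (hK : BergeK2tFree E t) {a b : V} (hab : a ≠ b)
    (hnadj : ∀ e ∈ E, a ∈ e → b ∉ e) {W : Finset V}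
    (hW : ∀ w ∈ W, (∃ e ∈ E, a ∈ e ∧ w ∈ e) ∧ ∃ e ∈ E, b ∈ e ∧ w ∈ e)
    (hinja : Set.InjOn (edgeThrough E a) W) (hinjb : Set.InjOn (edgeThrough E b) W) :
    #W < t := by
  by_contra! htW
  obtain ⟨c, hc, hcW⟩ := exists_injective_fin_mem htW
  have hF (i : Fin t) := edgeThrough_spec (hW _ (hcW i)).1
  have hG (i : Fin t) := edgeThrough_spec (hW _ (hcW i)).2
  exact hK ⟨a, b, c, fun i => edgeThrough E a (c i), fun i => edgeThrough E b (c i), hab, hc,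
    fun i => ⟨fun h => hnadj _ (hG i).1 (h ▸ (hG i).2.2) (hG i).2.1,
      fun h => hnadj _ (hF i).1 (hF i).2.1 (h ▸ (hF i).2.2)⟩, hF, hG,
    fun i j h => hc (hinja (hcW i) (hcW j) h), fun i j h => hc (hinjb (hcW i) (hcW j) h),
    fun i j (h : edgeThrough E a (c i) = edgeThrough E b (c j)) =>
      hnadj _ (hF i).1 (hF i).2.1 (h ▸ (hG j).2.1)⟩

theorem BergeBookFree.card_le_s14 (hB : BergeBookFree E s) (hlin : IsLinear E)
    (hunif : IsUniform E k) {a b : V} (hab : a ≠ b) {e₀ : Finset V} (he₀ : e₀ ∈ E) (ha : a ∈ e₀)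
    (hb : b ∈ e₀) {W : Finset V}
    (hW : ∀ w ∈ W, w ∉ e₀ ∧ (∃ e ∈ E, a ∈ e ∧ w ∈ e) ∧ ∃ e ∈ E, b ∈ e ∧ w ∈ e) :
    #W ≤ (2 * k - 3) * (s - 1) := by
  obtain ⟨S, hSW, hinja, hinjb, hcov⟩ := W.exists_rainbow_subset (edgeThrough E a) (edgeThrough E b)
  have hS := hB.card_lt hlin hab he₀ ha hb (fun w hw => hW w (hSW hw)) hinja hinjb
  have hclass {c : V} (hc : c ∈ e₀) (hadj : ∀ w ∈ W, ∃ e ∈ E, c ∈ e ∧ w ∈ e) (j : V) (hj : j ∈ S) :=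
    card_filter_edgeThrough_eq_le hunif (hadj j (hSW hj))
      (W := W) fun w hw => ⟨fun h => (hW w hw).1 (h ▸ hc), hadj w hw⟩
  calc #W ≤ (2 * (k - 1) - 1) * #S := W.card_le_mul_of_forall_exists_eq S hSW _ _ hcov (k - 1)
        (hclass ha fun w hw => (hW w hw).2.1) (hclass hb fun w hw => (hW w hw).2.2)
    _ ≤ (2 * k - 3) * (s - 1) := Nat.mul_le_mul (by omega) (by omega)

end Berge

namespace Hypergraph

variable {V : Type*} [DecidableEq V] {E : Finset (Finset V)} {k s t : ℕ}

/-- The middle vertices `j` of the paths `u — j — w` whose second edge avoids `u`. -/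
def middleVertices (E : Finset (Finset V)) (u w : V) : Finset V :=
  (nbhd E u).filter fun j => w ∈ nbhd (E.filter (u ∉ ·)) j

theorem mem_middleVertices {u w j : V} : j ∈ middleVertices E u w ↔
    j ∈ nbhd E u ∧ j ≠ w ∧ ∃ f ∈ E, u ∉ f ∧ j ∈ f ∧ w ∈ f := by
  simp only [middleVertices, mem_filter, mem_nbhd (v := j), ne_comm (a := w), and_assoc]

theorem exists_edge_of_mem_middleVertices {u w j : V} (h : j ∈ middleVertices E u w) :
    ∃ f ∈ E, w ∈ f ∧ j ∈ f := by
  obtain ⟨-, -, f, hf, -, hjf, hwf⟩ := mem_middleVertices.mp h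
  exact ⟨f, hf, hwf, hjf⟩

theorem middleVertices_subset (u w : V) : middleVertices E u w ⊆ nbhd E u := filter_subset _ _

theorem IsLinear.sum_degree_le [Fintype V] (hlin : IsLinear E) (hunif : IsUniform E k) (u : V) :
    (k - 1) * ∑ j ∈ nbhd E u, degree E j ≤
      (k - 1) * #(nbhd E u) + ∑ w ∈ univ.erase u, #(middleVertices E u w) := by
  let E' := E.filter (u ∉ ·)
  have hlin' : IsLinear E' := hlin.subset (filter_subset _ _)
  have hunif' : IsUniform E' k := hunif.subset (filter_subset _ _)
  have hnbhd (j : V) : (univ.erase u).filter (· ∈ nbhd E' j) = nbhd E' j := by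
    ext w
    simp only [mem_filter, mem_erase, mem_univ, and_true, and_iff_right_iff_imp]
    rintro hw rfl
    obtain ⟨-, f, hf, -, huf⟩ := mem_nbhd.mp hw
    exact (mem_filter.mp hf).2 huf
  calc (k - 1) * ∑ j ∈ nbhd E u, degree E j
      ≤ ∑ j ∈ nbhd E u, ((k - 1) + #(nbhd E' j)) := by
        rw [mul_sum]
        refine sum_le_sum fun j hj => ?_
        rw [hlin'.card_nbhd hunif', ← mul_one_add, add_comm 1]
        exact Nat.mul_le_mul_left _
          (hlin.degree_le_degree_filter_notMem_add_one (mem_nbhd.mp hj).1)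
    _ = (k - 1) * #(nbhd E u) + ∑ w ∈ univ.erase u, #(middleVertices E u w) := by
        rw [sum_add_distrib, sum_const, smul_eq_mul, mul_comm]
        congr 1
        calc ∑ j ∈ nbhd E u, #(nbhd E' j)
            = ∑ j ∈ nbhd E u, #((univ.erase u).bipartiteAbove (fun j w => w ∈ nbhd E' j) j) :=
              sum_congr rfl fun j _ => congrArg card (hnbhd j).symm
          _ = _ := sum_card_bipartiteAbove_eq_sum_card_bipartiteBelow _

theorem IsLinear.two_mul_card_middleVertices_add_two_le (hlin : IsLinear E)
    (hB : BergeBookFree E s) (hK : BergeK2tFree E t) {u w : V} (hwu : w ≠ u) :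
    2 * #(middleVertices E u w) + 2 ≤ 2 * (if w ∈ nbhd E u then s else t) +
      #((middleVertices E u w).offDiag.filter fun pq =>
        edgeThrough E u pq.1 = edgeThrough E u pq.2) +
      #((middleVertices E u w).offDiag.filter fun pq =>
        edgeThrough E w pq.1 = edgeThrough E w pq.2) := by
  obtain ⟨S, hSM, hinju, hinjw, hcov⟩ :=
    (middleVertices E u w).exists_rainbow_subset (edgeThrough E u) (edgeThrough E w)
  have hcount := two_mul_card_le_of_forall_exists_eq _ S hSM _ _ hcov
  have hadj : ∀ j ∈ S, (∃ e ∈ E, u ∈ e ∧ j ∈ e) ∧ ∃ e ∈ E, w ∈ e ∧ j ∈ e := fun j hj =>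
    ⟨(mem_nbhd.mp (middleVertices_subset u w (hSM hj))).2,
      exists_edge_of_mem_middleVertices (hSM hj)⟩
  have hS : #S < if w ∈ nbhd E u then s else t := by
    split_ifs with hw
    · obtain ⟨he₀, hu, hw₀⟩ := edgeThrough_spec (mem_nbhd.mp hw).2
      refine hB.card_lt hlin hwu.symm he₀ hu hw₀ (fun j hj => ⟨fun hj₀ => ?_, hadj j hj⟩)
        hinju hinjw
      -- if `j` lay on `uw`, the edge through `j` and `w` avoiding `u` would be `uw`
      obtain ⟨-, hjw, f, hf, huf, hjf, hwf⟩ := mem_middleVertices.mp (hSM hj)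
      exact huf (hlin.eq_of_mem hjw he₀ hf hj₀ hw₀ hjf hwf ▸ hu)
    · refine hK.card_lt hwu.symm (fun e he hue hwe => hw ?_) hadj hinju hinjw
      exact mem_nbhd.mpr ⟨hwu, e, he, hue, hwe⟩
  omega

theorem IsLinear.card_nbhd_filter_mem_nbhd_le (hlin : IsLinear E) (hunif : IsUniform E k)
    (hB : BergeBookFree E s) {u p : V} (hp : p ∈ nbhd E u) :
    #((nbhd E u).filter (· ∈ nbhd (E.filter (u ∉ ·)) p)) ≤ (2 * k - 3) * (s - 1) + (k - 2) := by
  let Q := (nbhd E u).filter (· ∈ nbhd (E.filter (u ∉ ·)) p)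
  obtain ⟨he₀, hu₀, hp₀⟩ := edgeThrough_spec (mem_nbhd.mp hp).2
  have hin : #(Q.filter (· ∈ edgeThrough E u p)) ≤ k - 2 := by
    refine (card_le_card fun q hq => ?_).trans
      (card_erase_erase_edgeThrough hunif (mem_nbhd.mp hp).1.symm (mem_nbhd.mp hp).2).le
    simp only [Q, mem_filter] at hq
    exact mem_erase.mpr ⟨(mem_nbhd.mp hq.1.2).1, mem_erase.mpr ⟨(mem_nbhd.mp hq.1.1).1, hq.2⟩⟩
  have hout : #(Q.filter (· ∉ edgeThrough E u p)) ≤ (2 * k - 3) * (s - 1) := by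
    refine hB.card_le_s14 hlin hunif (mem_nbhd.mp hp).1.symm he₀ hu₀ hp₀ fun q hq => ?_
    simp only [Q, mem_filter] at hq
    obtain ⟨-, f, hf, hpf, hqf⟩ := mem_nbhd.mp hq.1.2
    exact ⟨hq.2, (mem_nbhd.mp hq.1.1).2, f, (mem_filter.mp hf).1, hpf, hqf⟩
  have := card_filter_add_card_filter_not (s := Q) (· ∈ edgeThrough E u p)
  show #Q ≤ _
  omega

variable [Fintype V]

theorem IsLinear.sum_card_pairs_edgeThrough_root_le (hlin : IsLinear E)
    (hunif : IsUniform E k) (hB : BergeBookFree E s) (u : V) :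
    ∑ w ∈ univ.erase u, #((middleVertices E u w).offDiag.filter fun pq =>
        edgeThrough E u pq.1 = edgeThrough E u pq.2) ≤
      (2 * k - 3) * (s - 1) * ((k - 2) * #(nbhd E u)) := by
  let SP := (nbhd E u).offDiag.filter fun pq => edgeThrough E u pq.1 = edgeThrough E u pq.2
  let r (w : V) (pq : V × V) : Prop := pq.1 ∈ middleVertices E u w ∧ pq.2 ∈ middleVertices E u w
  have hSP : #SP ≤ (k - 2) * #(nbhd E u) := by
    refine card_le_mul_of_forall_snd_mem (T := fun p => ((edgeThrough E u p).erase u).erase p)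
      (fun pq hpq => ?_) fun p hp => ?_
    · simp only [SP, mem_filter, mem_offDiag] at hpq
      obtain ⟨⟨hp, hq, hpq⟩, he⟩ := hpq
      exact ⟨hp, mem_erase.mpr ⟨Ne.symm hpq, mem_erase.mpr ⟨(mem_nbhd.mp hq).1,
        he ▸ (edgeThrough_spec (mem_nbhd.mp hq).2).2.2⟩⟩⟩
    · exact (card_erase_erase_edgeThrough hunif (mem_nbhd.mp hp).1.symm (mem_nbhd.mp hp).2).le
  have hcodeg : ∀ pq ∈ SP, #((univ.erase u).bipartiteBelow r pq) ≤ (2 * k - 3) * (s - 1) := by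
    rintro ⟨p, q⟩ hpq
    simp only [SP, mem_filter, mem_offDiag] at hpq
    obtain ⟨⟨hp, hq, hpq⟩, he⟩ := hpq
    obtain ⟨he₀, hu₀, hp₀⟩ := edgeThrough_spec (mem_nbhd.mp hp).2
    have hq₀ : q ∈ edgeThrough E u p := he ▸ (edgeThrough_spec (mem_nbhd.mp hq).2).2.2
    -- the `w` joined to `p` and to `q` away from `u` lie off the spine `edgeThrough E u p ∋ p, q`
    refine hB.card_le_s14 hlin hunif hpq he₀ hp₀ hq₀ fun w hw => ?_
    simp only [r, mem_bipartiteBelow] at hw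
    obtain ⟨-, hpw, f, hf, huf, hpf, hwf⟩ := mem_middleVertices.mp hw.2.1
    obtain ⟨-, -, g, hg, -, hqg, hwg⟩ := mem_middleVertices.mp hw.2.2
    exact ⟨fun hw₀ => huf (hlin.eq_of_mem hpw he₀ hf hp₀ hw₀ hpf hwf ▸ hu₀), ⟨f, hf, hpf, hwf⟩,
      g, hg, hqg, hwg⟩
  calc ∑ w ∈ univ.erase u, #((middleVertices E u w).offDiag.filter fun pq =>
        edgeThrough E u pq.1 = edgeThrough E u pq.2)
      ≤ ∑ w ∈ univ.erase u, #(SP.bipartiteAbove r w) := sum_le_sum fun w _ =>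
        card_le_card fun pq hpq => by
          simp only [mem_filter, mem_offDiag] at hpq
          simp only [SP, r, mem_bipartiteAbove, mem_filter, mem_offDiag]
          exact ⟨⟨⟨middleVertices_subset u w hpq.1.1, middleVertices_subset u w hpq.1.2.1,
            hpq.1.2.2⟩, hpq.2⟩, hpq.1.1, hpq.1.2.1⟩
    _ = ∑ pq ∈ SP, #((univ.erase u).bipartiteBelow r pq) :=
        sum_card_bipartiteAbove_eq_sum_card_bipartiteBelow r
    _ ≤ (2 * k - 3) * (s - 1) * #SP := by
        rw [mul_comm]; exact sum_le_card_nsmul _ _ _ hcodeg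
    _ ≤ _ := Nat.mul_le_mul_left _ hSP

theorem IsLinear.sum_card_pairs_edgeThrough_endpoint_le (hlin : IsLinear E)
    (hunif : IsUniform E k) (hB : BergeBookFree E s) (u : V) :
    ∑ w ∈ univ.erase u, #((middleVertices E u w).offDiag.filter fun pq =>
        edgeThrough E w pq.1 = edgeThrough E w pq.2) ≤
      (k - 2) * (((2 * k - 3) * (s - 1) + (k - 2)) * #(nbhd E u)) := by
  let E' := E.filter (u ∉ ·)
  let QP := (nbhd E u).offDiag.filter fun pq => pq.2 ∈ nbhd E' pq.1
  let r (w : V) (pq : V × V) : Prop := pq.1 ∈ middleVertices E u w ∧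
    pq.2 ∈ middleVertices E u w ∧ edgeThrough E w pq.1 = edgeThrough E w pq.2
  have hQP : #QP ≤ ((2 * k - 3) * (s - 1) + (k - 2)) * #(nbhd E u) := by
    refine card_le_mul_of_forall_snd_mem (T := fun p => (nbhd E u).filter (· ∈ nbhd E' p))
      (fun pq hpq => ?_) fun p hp => ?_
    · simp only [QP, mem_filter, mem_offDiag] at hpq
      exact ⟨hpq.1.1, mem_filter.mpr ⟨hpq.1.2.1, hpq.2⟩⟩
    · exact hlin.card_nbhd_filter_mem_nbhd_le hunif hB hp
  have hcodeg : ∀ pq ∈ QP, #((univ.erase u).bipartiteBelow r pq) ≤ k - 2 := by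
    rintro ⟨p, q⟩ hpq
    simp only [QP, mem_filter, mem_offDiag] at hpq
    obtain ⟨⟨-, -, hpq⟩, hqp⟩ := hpq
    obtain ⟨-, f, hf, hpf, hqf⟩ := mem_nbhd.mp hqp
    refine (card_le_card fun w hw => ?_).trans
      (card_erase_erase_edgeThrough hunif hpq ⟨f, (mem_filter.mp hf).1, hpf, hqf⟩).le
    simp only [r, mem_bipartiteBelow] at hw
    obtain ⟨-, hp, hq, hpqw⟩ := hw
    obtain ⟨-, hpw, g, hg, -, hpg, hwg⟩ := mem_middleVertices.mp hp
    obtain ⟨-, hqw, -⟩ := mem_middleVertices.mp hq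
    obtain ⟨hgw, hwgw, hpgw⟩ := edgeThrough_spec ⟨g, hg, hwg, hpg⟩
    have hqgw : q ∈ edgeThrough E w p :=
      hpqw ▸ (edgeThrough_spec (exists_edge_of_mem_middleVertices hq)).2.2
    rw [hlin.edgeThrough_eq hpq hgw hpgw hqgw]
    exact mem_erase.mpr ⟨hqw.symm, mem_erase.mpr ⟨hpw.symm, hwgw⟩⟩
  calc ∑ w ∈ univ.erase u, #((middleVertices E u w).offDiag.filter fun pq =>
        edgeThrough E w pq.1 = edgeThrough E w pq.2)
      ≤ ∑ w ∈ univ.erase u, #(QP.bipartiteAbove r w) := sum_le_sum fun w _ =>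
        card_le_card fun ⟨p, q⟩ hpq => by
          simp only [mem_filter, mem_offDiag] at hpq
          obtain ⟨⟨hp, hq, hpq⟩, hpqw⟩ := hpq
          obtain ⟨-, hpw, g, hg, hug, hpg, hwg⟩ := mem_middleVertices.mp hp
          -- the edge through `w` and `p` is the one avoiding `u`, and it contains `q`
          have hgw := hlin.edgeThrough_eq hpw.symm hg hwg hpg
          have hqg : q ∈ g :=
            hgw ▸ hpqw ▸ (edgeThrough_spec (exists_edge_of_mem_middleVertices hq)).2.2
          simp only [QP, r, mem_bipartiteAbove, mem_filter, mem_offDiag]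
          exact ⟨⟨⟨middleVertices_subset u w hp, middleVertices_subset u w hq, hpq⟩,
            mem_nbhd.mpr ⟨Ne.symm hpq, g, mem_filter.mpr ⟨hg, hug⟩, hpg, hqg⟩⟩, hp, hq, hpqw⟩
    _ = ∑ pq ∈ QP, #((univ.erase u).bipartiteBelow r pq) :=
        sum_card_bipartiteAbove_eq_sum_card_bipartiteBelow r
    _ ≤ (k - 2) * #QP := by
        rw [mul_comm]; exact sum_le_card_nsmul _ _ _ hcodeg
    _ ≤ _ := Nat.mul_le_mul_left _ hQP

theorem IsLinear.two_mul_sum_card_middleVertices_le (hlin : IsLinear E) (hunif : IsUniform E k)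
    (hB : BergeBookFree E s) (hK : BergeK2tFree E t) (u : V) :
    2 * ∑ w ∈ univ.erase u, #(middleVertices E u w) + 2 * (Fintype.card V - 1) ≤
      2 * (s * #(nbhd E u) + t * (Fintype.card V - 1 - #(nbhd E u))) +
        (2 * k - 3) * (s - 1) * ((k - 2) * #(nbhd E u)) +
        (k - 2) * (((2 * k - 3) * (s - 1) + (k - 2)) * #(nbhd E u)) := by
  have hND : nbhd E u ⊆ univ.erase u := fun j hj =>
    mem_erase.mpr ⟨(mem_nbhd.mp hj).1, mem_univ j⟩
  have hD : #(univ.erase u) = Fintype.card V - 1 := by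
    rw [card_erase_of_mem (mem_univ u), card_univ]
  have hite : ∑ w ∈ univ.erase u, (if w ∈ nbhd E u then s else t) =
      s * #(nbhd E u) + t * (Fintype.card V - 1 - #(nbhd E u)) := by
    have hsplit := card_filter_add_card_filter_not (s := univ.erase u) (· ∈ nbhd E u)
    rw [filter_mem_eq_inter, inter_eq_right.mpr hND, hD] at hsplit
    rw [sum_ite, sum_const, sum_const, filter_mem_eq_inter, inter_eq_right.mpr hND,
      smul_eq_mul, smul_eq_mul, mul_comm, mul_comm t]
    congr
    omega
  have hmid := sum_le_sum (s := univ.erase u) fun w hw =>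
    hlin.two_mul_card_middleVertices_add_two_le hB hK (ne_of_mem_erase hw)
  simp only [sum_add_distrib, ← mul_sum, sum_const, smul_eq_mul, hite, hD] at hmid
  have hroot := hlin.sum_card_pairs_edgeThrough_root_le hunif hB u
  have hendpoint := hlin.sum_card_pairs_edgeThrough_endpoint_le hunif hB u
  omega

theorem IsLinear.two_mul_sum_degree_le (hlin : IsLinear E) (hunif : IsUniform E k)
    (hB : BergeBookFree E s) (hK : BergeK2tFree E t) (hk : 2 ≤ k) (hs : 2 ≤ s)
    (ht : (t : ℝ) ≤ (6 * (k : ℝ) ^ 2 - 15 * (k : ℝ) + 10) * ((s : ℝ) - 1) / 2 + 1) (u : V) :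
    2 * ((k : ℝ) - 1) * ∑ j ∈ nbhd E u, (degree E j : ℝ) ≤
      (6 * (k : ℝ) ^ 2 - 15 * (k : ℝ) + 10) * ((s : ℝ) - 1) * (Fintype.card V - 1) := by
  have hN : #(nbhd E u) ≤ Fintype.card V - 1 := by
    rw [← card_univ, ← card_erase_of_mem (mem_univ u)]
    exact card_le_card fun j hj => mem_erase.mpr ⟨(mem_nbhd.mp hj).1, mem_univ j⟩
  have hV : 1 ≤ Fintype.card V := Fintype.card_pos_iff.mpr ⟨u⟩
  have hdeg := (Nat.cast_le (α := ℝ)).mpr (hlin.sum_degree_le hunif u)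
  have hpaths := (Nat.cast_le (α := ℝ)).mpr (hlin.two_mul_sum_card_middleVertices_le hunif hB hK u)
  push_cast [Nat.cast_sub (by omega : 1 ≤ k), Nat.cast_sub (by omega : 2 ≤ k),
    Nat.cast_sub (by omega : 3 ≤ 2 * k), Nat.cast_sub (by omega : 1 ≤ s), Nat.cast_sub hN,
    Nat.cast_sub hV] at hdeg hpaths
  have hNR : (0 : ℝ) ≤ #(nbhd E u) := Nat.cast_nonneg _
  have hNR' : (#(nbhd E u) : ℝ) ≤ Fintype.card V - 1 := by
    have := (Nat.cast_le (α := ℝ)).mpr hN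
    rwa [Nat.cast_sub hV, Nat.cast_one] at this
  have hkR : (2 : ℝ) ≤ k := by exact_mod_cast hk
  have hsR : (2 : ℝ) ≤ s := by exact_mod_cast hs
  -- `6k² - 15k + 10` is what makes `C (s - 1)` pay for each vertex of `nbhd E u`, and `ht` for
  -- each other vertex
  have hcostNbhd : 2 * ((k : ℝ) - 1) + 2 * ((s : ℝ) - 1) +
      ((k : ℝ) - 2) * (2 * ((2 * (k : ℝ) - 3) * ((s : ℝ) - 1)) + ((k : ℝ) - 2)) ≤
      (6 * (k : ℝ) ^ 2 - 15 * (k : ℝ) + 10) * ((s : ℝ) - 1) := by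
    nlinarith [mul_nonneg (sub_nonneg.mpr hsR) (sub_nonneg.mpr hkR)]
  have hcostOther : 2 * ((t : ℝ) - 1) ≤
      (6 * (k : ℝ) ^ 2 - 15 * (k : ℝ) + 10) * ((s : ℝ) - 1) := by
    linarith
  nlinarith [mul_le_mul_of_nonneg_right hcostNbhd hNR,
    mul_le_mul_of_nonneg_right hcostOther (sub_nonneg.mpr hNR')]

end Hypergraph

theorem specRad_bound_book_k2t_general (n k s t : ℕ) (hk : 3 ≤ k)
    (hs : 2 ≤ s)
    (ht2 : (t : ℝ) ≤ (6 * (k : ℝ) ^ 2 - 15 * (k : ℝ) + 10) * ((s : ℝ) - 1) / 2 + 1)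
    (E : Finset (Finset (Fin n)))
    (hunif : ∀ e ∈ E, e.card = k)
    (hlin : ∀ e ∈ E, ∀ f ∈ E, e ≠ f → (e ∩ f).card ≤ 1)
    (hB : BergeBookFree E s) (hK : BergeK2tFree E t) :
    specRad n k (adjT n k E)
      ≤ Real.sqrt ((6 * (k : ℝ) ^ 2 - 15 * (k : ℝ) + 10) * ((s : ℝ) - 1)
          * ((n : ℝ) - 1) / (2 * ((k : ℝ) - 1) ^ 2)) := by
  refine Real.sSup_le ?_ (Real.sqrt_nonneg _)
  rintro _ ⟨lam, hlam, rfl⟩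
  obtain ⟨y, u, hy0, hy1, hyu, hsub⟩ := hlam.exists_subEigenvector (by omega) hunif
  have hspectral := IsLinear.mul_sq_le_sum_degree hlin hunif (by omega) (norm_nonneg lam)
    hy0 hy1 hyu hsub
  have hcount := IsLinear.two_mul_sum_degree_le hlin hunif hB hK (by omega) hs ht2 u
  rw [Fintype.card_fin] at hcount
  have hk1 : (0 : ℝ) < k - 1 := by
    have : (3 : ℝ) ≤ k := by exact_mod_cast hk
    linarith
  rw [← Real.sqrt_sq (norm_nonneg lam)]
  refine Real.sqrt_le_sqrt ((le_div_iff₀ (by positivity)).mpr ?_)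
  calc ‖lam‖ ^ 2 * (2 * ((k : ℝ) - 1) ^ 2) = 2 * ((k : ℝ) - 1) * (((k : ℝ) - 1) * ‖lam‖ ^ 2) := by
        ring
    _ ≤ 2 * ((k : ℝ) - 1) * ∑ j ∈ nbhd E u, (degree E j : ℝ) := by gcongr
    _ ≤ _ := hcount

/-- A connected linear `k`-uniform hypergraph on `n ≥ 3` vertices (`k ≥ 3`) with no
Berge-`B_s` and no Berge-`K_{2,t}` (`s ≥ 2`, `1 ≤ t ≤ (6k²-15k+10)(s-1)/2 + 1`) has
spectral radius at most `√((6k²-15k+10)(s-1)(n-1)/(2(k-1)²))`. -/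
theorem specRad_bound_book_k2t (n k s t : ℕ) (hn : 3 ≤ n) (hk : 3 ≤ k)
    (hs : 2 ≤ s) (ht1 : 1 ≤ t)
    (ht2 : (t : ℝ) ≤ (6 * (k : ℝ) ^ 2 - 15 * (k : ℝ) + 10) * ((s : ℝ) - 1) / 2 + 1)
    (E : Finset (Finset (Fin n)))
    (hunif : ∀ e ∈ E, e.card = k)
    (hlin : ∀ e ∈ E, ∀ f ∈ E, e ≠ f → (e ∩ f).card ≤ 1)
    (hconn : ∀ u v : Fin n,
      Relation.ReflTransGen (fun a b => ∃ e ∈ E, a ∈ e ∧ b ∈ e) u v)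
    (hB : BergeBookFree E s) (hK : BergeK2tFree E t) :
    specRad n k (adjT n k E)
      ≤ Real.sqrt ((6 * (k : ℝ) ^ 2 - 15 * (k : ℝ) + 10) * ((s : ℝ) - 1)
          * ((n : ℝ) - 1) / (2 * ((k : ℝ) - 1) ^ 2)) :=
  specRad_bound_book_k2t_general n k s t hk hs ht2 E hunif hlin hB hK
end
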